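/- arXiv:1411.2874 — 2 statements merged into one kernel-verified Lean document; each statement's English description precedes it below -/
import Mathlib

section
/- Consider the single-UAV CR-UAV instance on V = {0,1,2,3} with RD(0) = 5, RD(1) = 10, RD(2) = 6, RD(3) = 9, FT(0,1) = 1, FT(2,3) = 1, and FT = 2 for the remaining four pairs (this FT is a metric). The infinite periodic path (3,2,0,1,0,2,3,0,2,1,0)^ω is a solution of this instance, but there is no finite path u of length at most 10 = (max_v RD(v))/(min_{v≠v′} FT(v,v′)) such that u^ω is a solution; in particular the shortest possible period length of a periodic solution is 11, refuting the claimed bound of Theorem 4.5 of Basilico et al. -/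
namespace CRUAV

/-- Duration of the subpath of an infinite path `s` between positions `a` and `b`. -/
def dur {V : Type*} (FT : V → V → ℕ) (s : ℕ → V) (a b : ℕ) : ℕ :=
  ∑ i ∈ Finset.Ico a b, FT (s i) (s (i + 1))

/-- `s` is a solution: an infinite path (consecutive vertices distinct) visiting every
vertex infinitely often, in which any subpath joining consecutive occurrences of a
vertex `v` has duration at most `RD v`. -/
def IsSolution {V : Type*} (RD : V → ℕ) (FT : V → V → ℕ) (s : ℕ → V) : Prop :=
  (∀ n, s n ≠ s (n + 1)) ∧
  (∀ v : V, ∀ N : ℕ, ∃ n, N ≤ n ∧ s n = v) ∧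
  (∀ v : V, ∀ a b : ℕ, a < b → s a = v → s b = v →
      (∀ i, a < i → i < b → s i ≠ v) → dur FT s a b ≤ RD v)

/-- The infinite periodic path obtained by repeating the finite word `u` forever. -/
def omegaPath {V : Type*} (u : List V) (d : V) : ℕ → V :=
  fun n => u.getD (n % u.length) d

/-- The relative deadlines of the counterexample instance. -/
def RD12 : Fin 4 → ℕ := ![5, 10, 6, 9]

/-- The flight times of the counterexample instance: `FT 0 1 = FT 2 3 = 1` and all
other pairs of distinct vertices have flight time `2` (a metric). -/
def FT12 : Fin 4 → Fin 4 → ℕ := fun v w =>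
  if v = w then 0
  else if (v = 0 ∧ w = 1) ∨ (v = 1 ∧ w = 0) ∨ (v = 2 ∧ w = 3) ∨ (v = 3 ∧ w = 2) then 1
  else 2

/-- The period of a solution with the shortest possible period. -/
def u12 : List (Fin 4) := [3, 2, 0, 1, 0, 2, 3, 0, 2, 1, 0]

/-! ### Auxiliary machinery -/

lemma omega_congr (u : List (Fin 4)) (d : Fin 4) {a b : ℕ}
    (h : a % u.length = b % u.length) : omegaPath u d a = omegaPath u d b := by
  simp [omegaPath, h]

lemma omega_add_length (u : List (Fin 4)) (d : Fin 4) (n : ℕ) :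
    omegaPath u d (n + u.length) = omegaPath u d n :=
  omega_congr u d (by simp [Nat.add_mod_right])

lemma omega_mod (u : List (Fin 4)) (d : Fin 4) (n : ℕ) :
    omegaPath u d (n % u.length) = omegaPath u d n :=
  omega_congr u d (Nat.mod_mod_of_dvd n dvd_rfl)

lemma dur_eq_range {V : Type*} (FT : V → V → ℕ) (s : ℕ → V) (a b : ℕ) :
    dur FT s a b = ∑ i ∈ Finset.range (b - a), FT (s (a + i)) (s (a + i + 1)) := by
  rw [dur, Finset.sum_Ico_eq_sum_range]

lemma dur_mono {V : Type*} (FT : V → V → ℕ) (s : ℕ → V) {a b c : ℕ} (h : b ≤ c) :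
    dur FT s a b ≤ dur FT s a c :=
  Finset.sum_le_sum_of_subset (Finset.Ico_subset_Ico le_rfl h)

/-- Decidable characterization of `IsSolution` for the periodic path `u^ω`. -/
def CheckProp (u : List (Fin 4)) : Prop :=
  0 < u.length ∧
  (∀ r ∈ Finset.range u.length, omegaPath u 0 r ≠ omegaPath u 0 (r + 1)) ∧
  (∀ v : Fin 4, ∃ i ∈ Finset.range u.length, omegaPath u 0 i = v) ∧
  (∀ v : Fin 4, ∀ r ∈ Finset.range u.length, ∀ m ∈ Finset.Icc 1 u.length,
      omegaPath u 0 r = v → omegaPath u 0 (r + m) = v →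
      (∀ i ∈ Finset.Ioo 0 m, omegaPath u 0 (r + i) ≠ v) →
      dur FT12 (omegaPath u 0) r (r + m) ≤ RD12 v)

instance : DecidablePred CheckProp := fun u => by
  unfold CheckProp; infer_instance

/-- A helper: `getD` agrees with the periodic path on indices below the length. -/
lemma getD_omega (u : List (Fin 4)) (i : ℕ) (hi : i < u.length) :
    u.getD i 0 = omegaPath u 0 i := by
  rw [omegaPath, Nat.mod_eq_of_lt hi]

/-! ### `CheckProp` implies `IsSolution` -/

lemma sol_of_check (u : List (Fin 4)) (h : CheckProp u) :
    IsSolution RD12 FT12 (omegaPath u 0) := by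
  obtain ⟨hL, hne, hex, hgap⟩ := h
  refine ⟨?_, ?_, ?_⟩
  · intro n
    have h1 : omegaPath u 0 n = omegaPath u 0 (n % u.length) := (omega_mod u 0 n).symm
    have h2 : omegaPath u 0 (n + 1) = omegaPath u 0 (n % u.length + 1) :=
      omega_congr u 0 (by
        rw [Nat.add_mod n 1, Nat.add_mod (n % u.length) 1, Nat.mod_mod_of_dvd n dvd_rfl])
    rw [h1, h2]
    exact hne _ (Finset.mem_range.2 (Nat.mod_lt _ hL))
  · intro v N
    obtain ⟨i, hi, hiv⟩ := hex v
    rw [Finset.mem_range] at hi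
    refine ⟨(N / u.length + 1) * u.length + i, ?_, ?_⟩
    · have h1 := Nat.div_add_mod N u.length
      have h2 : N % u.length < u.length := Nat.mod_lt _ hL
      have h3 : (N / u.length + 1) * u.length = u.length * (N / u.length) + u.length := by
        ring
      omega
    · rw [omega_congr u 0 (a := (N / u.length + 1) * u.length + i) (b := i)
        (by rw [Nat.add_comm, Nat.add_mul_mod_self_right])]
      exact hiv
  · intro v a b hab hsa hsb hbtw
    have hbound : b ≤ a + u.length := by
      by_contra hcon
      push_neg at hcon
      exact hbtw (a + u.length) (by omega) (by omega)
        (by rw [omega_add_length]; exact hsa)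
    have hr : a % u.length < u.length := Nat.mod_lt _ hL
    have shift : ∀ t, omegaPath u 0 (a % u.length + t) = omegaPath u 0 (a + t) := by
      intro t
      exact omega_congr u 0 (by
        rw [Nat.add_mod (a % u.length) t, Nat.add_mod a t, Nat.mod_mod_of_dvd a dvd_rfl])
    have hdur : dur FT12 (omegaPath u 0) (a % u.length) (a % u.length + (b - a))
        = dur FT12 (omegaPath u 0) a b := by
      rw [dur_eq_range, dur_eq_range]
      have hba : a % u.length + (b - a) - a % u.length = b - a := by omega
      rw [hba]
      refine Finset.sum_congr rfl fun i _ => ?_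
      rw [show a % u.length + i + 1 = a % u.length + (i + 1) from by omega,
        show a + i + 1 = a + (i + 1) from by omega, shift, shift]
    have hmain := hgap v (a % u.length) (Finset.mem_range.2 hr) (b - a)
      (Finset.mem_Icc.2 ⟨by omega, by omega⟩)
      (by have := shift 0; simpa using this.trans (by rw [Nat.add_zero]; exact hsa))
      (by rw [shift (b - a), show a + (b - a) = b from by omega]; exact hsb)
      (by
        intro i hi
        rw [Finset.mem_Ioo] at hi
        rw [shift i]
        exact hbtw (a + i) (by omega) (by omega))
    rwa [hdur] at hmain


/-! ### `IsSolution` implies the finite checks used by the search -/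

lemma len_pos_of_sol (u : List (Fin 4)) (h : IsSolution RD12 FT12 (omegaPath u 0)) :
    0 < u.length := by
  by_contra hcon
  have h0 : u = [] := List.length_eq_zero_iff.1 (by omega)
  have := h.1 0
  simp [h0, omegaPath] at this

lemma dur_zero {V : Type*} (FT : V → V → ℕ) (s : ℕ → V) (a : ℕ) : dur FT s a a = 0 := by
  simp [dur]

lemma dur_single {V : Type*} (FT : V → V → ℕ) (s : ℕ → V) (a : ℕ) :
    dur FT s a (a + 1) = FT (s a) (s (a + 1)) := by
  rw [dur_eq_range]
  simp

lemma dur_split {V : Type*} (FT : V → V → ℕ) (s : ℕ → V) {a b c : ℕ}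
    (hab : a ≤ b) (hbc : b ≤ c) : dur FT s a b + dur FT s b c = dur FT s a c :=
  Finset.sum_Ico_consecutive _ hab hbc

/-- Key gap bound: if `a` carries `v` and there is no `v` strictly between `a` and `e`,
then the duration from `a` to `e` is at most `RD v`. -/
lemma gap_bound (u : List (Fin 4)) (h : IsSolution RD12 FT12 (omegaPath u 0))
    {v : Fin 4} {a e : ℕ} (hae : a ≤ e) (ha : omegaPath u 0 a = v)
    (hnov : ∀ i, a < i → i < e → omegaPath u 0 i ≠ v) :
    dur FT12 (omegaPath u 0) a e ≤ RD12 v := by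
  obtain ⟨h1, h2, h3⟩ := h
  classical
  have hex : ∃ n, a < n ∧ omegaPath u 0 n = v := by
    obtain ⟨n, hn1, hn2⟩ := h2 v (a + 1)
    exact ⟨n, by omega, hn2⟩
  obtain ⟨hab, hsb⟩ := Nat.find_spec hex
  have hmin : ∀ i, a < i → i < Nat.find hex → omegaPath u 0 i ≠ v := by
    intro i hi1 hi2 hcon
    exact Nat.find_min hex hi2 ⟨hi1, hcon⟩
  have heb : e ≤ Nat.find hex := by
    by_contra hcon
    push_neg at hcon
    rcases Nat.lt_or_ge a e with hae' | hae'
    · exact hnov _ hab hcon hsb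
    · omega
  exact le_trans (dur_mono _ _ heb) (h3 v a (Nat.find hex) hab ha hsb hmin)

lemma rev_take_succ (u : List (Fin 4)) (m : ℕ) (hm : m < u.length) :
    (u.take (m + 1)).reverse = u.getD m 0 :: (u.take m).reverse := by
  have h1 : u.take (m + 1) = u.take m ++ [u[m]] := by
    rw [List.take_succ, List.getElem?_eq_getElem hm, Option.toList_some]
  rw [h1, List.reverse_append, List.reverse_singleton, List.singleton_append,
    List.getD_eq_getElem u 0 hm]

lemma getD_mem (u : List (Fin 4)) (i : ℕ) (hi : i < u.length) : u.getD i 0 ∈ u := by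
  rw [List.getD_eq_getElem u 0 hi]
  exact List.getElem_mem _

/-! ### The fast boolean scans used by the search -/

/-- Scan a reversed word for the most recent occurrence of `v`, returning the
accumulated duration from that occurrence to the fixed end position. -/
def costBack (v : Fin 4) : List (Fin 4) → ℕ → Option ℕ
  | [], _ => none
  | x :: t, acc =>
    if x = v then some acc
    else
      match t with
      | [] => none
      | y :: _ => costBack v t (acc + FT12 y x)

/-- Scan a (forward) word for the first occurrence of `v`, returning the
accumulated duration from the start to that occurrence. -/
def costFront (v : Fin 4) : List (Fin 4) → ℕ → Option ℕ
  | [], _ => none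
  | x :: t, acc =>
    if x = v then some acc
    else
      match t with
      | [] => none
      | y :: _ => costFront v t (acc + FT12 x y)

lemma costBack_one (v x : Fin 4) (acc : ℕ) :
    costBack v [x] acc = if x = v then some acc else none := rfl

lemma costBack_cons2 (v x y : Fin 4) (t : List (Fin 4)) (acc : ℕ) :
    costBack v (x :: y :: t) acc =
      if x = v then some acc else costBack v (y :: t) (acc + FT12 y x) := rfl

lemma costFront_one (v x : Fin 4) (acc : ℕ) :
    costFront v [x] acc = if x = v then some acc else none := rfl

lemma costFront_cons2 (v x y : Fin 4) (t : List (Fin 4)) (acc : ℕ) :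
    costFront v (x :: y :: t) acc =
      if x = v then some acc else costFront v (y :: t) (acc + FT12 x y) := rfl

lemma costBack_none (v : Fin 4) :
    ∀ (l : List (Fin 4)) (acc : ℕ), costBack v l acc = none → v ∉ l := by
  intro l
  induction l with
  | nil => simp
  | cons x t ih =>
    intro acc h
    by_cases hxv : x = v
    · simp [costBack, hxv] at h
    · rcases t with _ | ⟨y, rest⟩
      · simp [hxv]
        exact fun hc => hxv hc.symm
      · simp only [costBack, if_neg hxv] at h
        have := ih _ h
        simp [this]
        exact fun hc => hxv hc.symm

lemma costFront_none (v : Fin 4) :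
    ∀ (l : List (Fin 4)) (acc : ℕ), costFront v l acc = none → v ∉ l := by
  intro l
  induction l with
  | nil => simp
  | cons x t ih =>
    intro acc h
    by_cases hxv : x = v
    · simp [costFront, hxv] at h
    · rcases t with _ | ⟨y, rest⟩
      · simp [hxv]
        exact fun hc => hxv hc.symm
      · simp only [costFront, if_neg hxv] at h
        have := ih _ h
        simp [this]
        exact fun hc => hxv hc.symm

lemma costBack_spec (u : List (Fin 4)) (v : Fin 4) :
    ∀ (c e E acc cb : ℕ),
      c < u.length → c ≤ e →
      acc = dur FT12 (omegaPath u 0) c e →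
      (∀ i, c < i → i < E → omegaPath u 0 i ≠ v) →
      costBack v ((u.take (c + 1)).reverse) acc = some cb →
      ∃ a, a ≤ c ∧ cb = dur FT12 (omegaPath u 0) a e ∧ omegaPath u 0 a = v ∧
        (∀ i, a < i → i < E → omegaPath u 0 i ≠ v) := by
  intro c
  induction c with
  | zero =>
    intro e E acc cb hc hce hacc hnov hscan
    rw [rev_take_succ u 0 hc, List.take_zero, List.reverse_nil, costBack_one] at hscan
    by_cases hxv : u.getD 0 0 = v
    · rw [if_pos hxv] at hscan
      have hacb : acc = cb := Option.some.inj hscan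
      exact ⟨0, le_rfl, by omega, by rw [← getD_omega u 0 hc]; exact hxv, hnov⟩
    · rw [if_neg hxv] at hscan
      exact absurd hscan (by simp)
  | succ c' ih =>
    intro e E acc cb hc hce hacc hnov hscan
    have hc' : c' < u.length := by omega
    rw [rev_take_succ u (c' + 1) hc, rev_take_succ u c' hc', costBack_cons2] at hscan
    by_cases hxv : u.getD (c' + 1) 0 = v
    · rw [if_pos hxv] at hscan
      have hacb : acc = cb := Option.some.inj hscan
      exact ⟨c' + 1, le_rfl, by omega, by rw [← getD_omega u _ hc]; exact hxv, hnov⟩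
    · rw [if_neg hxv] at hscan
      rw [← rev_take_succ u c' hc'] at hscan
      have hdur' : acc + FT12 (u.getD c' 0) (u.getD (c' + 1) 0)
          = dur FT12 (omegaPath u 0) c' e := by
        rw [hacc, getD_omega u c' hc', getD_omega u (c' + 1) hc]
        rw [← dur_split FT12 (omegaPath u 0) (by omega : c' ≤ c' + 1) hce, dur_single]
        omega
      have hnov' : ∀ i, c' < i → i < E → omegaPath u 0 i ≠ v := by
        intro i hi1 hi2
        rcases Nat.eq_or_lt_of_le hi1 with he | hlt
        · rw [← he, ← getD_omega u _ hc]
          exact hxv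
        · exact hnov i hlt hi2
      obtain ⟨a, ha1, ha2, ha3, ha4⟩ := ih e E (acc + FT12 (u.getD c' 0) (u.getD (c' + 1) 0)) cb hc' (by omega) hdur' hnov' hscan
      exact ⟨a, by omega, ha2, ha3, ha4⟩

lemma costFront_spec (u : List (Fin 4)) (v : Fin 4) :
    ∀ (l : List (Fin 4)) (j acc cf : ℕ),
      (∀ idx, idx < l.length → l.getD idx 0 = omegaPath u 0 (j + idx)) →
      acc = dur FT12 (omegaPath u 0) 0 j →
      (∀ i, i < j → omegaPath u 0 i ≠ v) →
      costFront v l acc = some cf →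
      ∃ b, j ≤ b ∧ b < j + l.length ∧ cf = dur FT12 (omegaPath u 0) 0 b ∧
        omegaPath u 0 b = v ∧ (∀ i, i < b → omegaPath u 0 i ≠ v) := by
  intro l
  induction l with
  | nil => intro j acc cf _ _ _ hscan; simp [costFront] at hscan
  | cons x t ih =>
    intro j acc cf hpt hacc hnov hscan
    have hx : x = omegaPath u 0 j := by
      have := hpt 0 (by simp)
      simpa using this
    by_cases hxv : x = v
    · rcases t with _ | ⟨y, rest⟩
      · rw [costFront_one, if_pos hxv] at hscan
        have hacb : acc = cf := Option.some.inj hscan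
        exact ⟨j, le_rfl, by simp, by omega, by rw [← hx]; exact hxv, hnov⟩
      · rw [costFront_cons2, if_pos hxv] at hscan
        have hacb : acc = cf := Option.some.inj hscan
        exact ⟨j, le_rfl, by simp, by omega, by rw [← hx]; exact hxv, hnov⟩
    · rcases t with _ | ⟨y, rest⟩
      · rw [costFront_one, if_neg hxv] at hscan
        exact absurd hscan (by simp)
      · rw [costFront_cons2, if_neg hxv] at hscan
        have hy : y = omegaPath u 0 (j + 1) := by
          have := hpt 1 (by simp)
          simpa using this
        have hpt' : ∀ idx, idx < (y :: rest).length →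
            (y :: rest).getD idx 0 = omegaPath u 0 (j + 1 + idx) := by
          intro idx hidx
          have := hpt (idx + 1) (by simp only [List.length_cons] at hidx ⊢; omega)
          rw [show j + (idx + 1) = j + 1 + idx from by omega] at this
          simpa using this
        have hacc' : acc + FT12 x y = dur FT12 (omegaPath u 0) 0 (j + 1) := by
          rw [hacc, hx, hy, ← dur_split FT12 (omegaPath u 0) (Nat.zero_le j)
            (by omega : j ≤ j + 1), dur_single]
        have hnov' : ∀ i, i < j + 1 → omegaPath u 0 i ≠ v := by
          intro i hi
          rcases Nat.lt_or_ge i j with h' | h'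
          · exact hnov i h'
          · have : i = j := by omega
            rw [this, ← hx]
            exact hxv
        obtain ⟨b, hb1, hb2, hb3, hb4, hb5⟩ := ih (j + 1) (acc + FT12 x y) cf hpt' hacc' hnov' hscan
        exact ⟨b, by omega, by simp at hb2 ⊢; omega, hb3, hb4, hb5⟩

/-! ### The pruned search -/

/-- Prune test for a reversed prefix: last two letters distinct, and for every
vertex `v`, the duration from the most recent occurrence of `v` before the last
position to the last position is within the deadline of `v`. -/
def pruneChk : List (Fin 4) → Bool
  | x :: y :: t =>
    decide (x ≠ y) &&
      (List.finRange 4).all fun v =>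
        match costBack v (y :: t) (FT12 y x) with
        | none => true
        | some cb => decide (cb ≤ RD12 v)
  | _ => true

/-- Full test for a reversed period: every vertex occurs, the word wraps with
distinct letters, and every wrap-around gap is within its deadline. -/
def wrapChk : List (Fin 4) → Bool
  | [] => false
  | x :: t =>
    let q := (x :: t).reverse
    let x0 := q.getD 0 0
    decide (x ≠ x0) &&
      (List.finRange 4).all fun v =>
        match costBack v (x :: t) 0, costFront v q 0 with
        | some cb, some cf => decide (cb + FT12 x x0 + cf ≤ RD12 v)
        | _, _ => false

/-- Depth-first search over all words (stored reversed), pruned by `pruneChk`. -/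
def dfs : ℕ → List (Fin 4) → Bool
  | 0, r => wrapChk r
  | k + 1, r => (List.finRange 4).any fun a => pruneChk (a :: r) && dfs k (a :: r)

lemma prune_sound (u : List (Fin 4)) (h : IsSolution RD12 FT12 (omegaPath u 0)) :
    ∀ m, m ≤ u.length → pruneChk ((u.take m).reverse) = true := by
  intro m hm
  match m with
  | 0 => simp [pruneChk]
  | 1 =>
    rw [rev_take_succ u 0 (by omega)]
    simp [pruneChk]
  | (m + 2) =>
    have hm1 : m + 1 < u.length := by omega
    have hm0 : m < u.length := by omega
    rw [rev_take_succ u (m + 1) hm1, rev_take_succ u m hm0]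
    rw [pruneChk]
    rw [Bool.and_eq_true, decide_eq_true_eq]
    constructor
    · rw [getD_omega u _ hm1, getD_omega u _ hm0]
      exact fun hc => h.1 m hc.symm
    · rw [List.all_eq_true]
      intro v _
      rw [← rev_take_succ u m hm0]
      rcases hscan : costBack v ((u.take (m + 1)).reverse)
          (FT12 (u.getD m 0) (u.getD (m + 1) 0)) with _ | cb
      · rfl
      · have hacc : FT12 (u.getD m 0) (u.getD (m + 1) 0)
            = dur FT12 (omegaPath u 0) m (m + 1) := by
          rw [dur_single, getD_omega u _ hm0, getD_omega u _ hm1]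
        obtain ⟨a, ha1, ha2, ha3, ha4⟩ := costBack_spec u v m (m + 1) (m + 1) _ cb hm0
          (by omega) hacc (by intro i h1 h2; omega) hscan
        simp only [decide_eq_true_eq]
        rw [ha2]
        exact gap_bound u h (by omega) ha3 ha4

lemma wrap_sound (u : List (Fin 4)) (h : IsSolution RD12 FT12 (omegaPath u 0)) :
    wrapChk (u.reverse) = true := by
  have hL : 0 < u.length := len_pos_of_sol u h
  have hs0 : omegaPath u 0 u.length = omegaPath u 0 0 :=
    omega_congr u 0 (by rw [Nat.mod_self, Nat.zero_mod])
  have htake : u.take u.length = u := List.take_length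
  have hrev : u.reverse = u.getD (u.length - 1) 0 :: (u.take (u.length - 1)).reverse := by
    conv_lhs => rw [← htake, show u.length = (u.length - 1) + 1 from by omega]
    exact rev_take_succ u (u.length - 1) (by omega)
  rw [hrev, wrapChk]
  have hrevrev : (u.getD (u.length - 1) 0 :: (u.take (u.length - 1)).reverse).reverse = u := by
    rw [← hrev, List.reverse_reverse]
  rw [hrevrev]
  rw [Bool.and_eq_true, decide_eq_true_eq]
  have hget0 : u.getD 0 0 = omegaPath u 0 0 := getD_omega u 0 hL
  constructor
  · rw [getD_omega u _ (by omega : u.length - 1 < u.length), hget0]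
    intro hc
    have := h.1 (u.length - 1)
    rw [show u.length - 1 + 1 = u.length from by omega, hs0] at this
    exact this hc
  · rw [List.all_eq_true]
    intro v _
    have hpres : ∃ i, i < u.length ∧ omegaPath u 0 i = v := by
      obtain ⟨n, -, hn⟩ := h.2.1 v 0
      exact ⟨n % u.length, Nat.mod_lt _ hL, by rw [omega_mod]; exact hn⟩
    rcases hscanB : costBack v (u.getD (u.length - 1) 0 :: (u.take (u.length - 1)).reverse) 0
        with _ | cb
    · exfalso
      rw [← hrev] at hscanB
      have hnm := costBack_none v _ _ hscanB
      obtain ⟨i, hi, hiv⟩ := hpres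
      rw [List.mem_reverse] at hnm
      exact hnm (by rw [← hiv, ← getD_omega u i hi]; exact getD_mem u i hi)
    · rcases hscanF : costFront v u 0 with _ | cf
      · exfalso
        have hnm := costFront_none v _ _ hscanF
        obtain ⟨i, hi, hiv⟩ := hpres
        exact hnm (by rw [← hiv, ← getD_omega u i hi]; exact getD_mem u i hi)
      · -- bound the wrap-around gap
        rw [← hrev] at hscanB
        rw [← htake] at hscanB
        obtain ⟨a, ha1, ha2, ha3, ha4⟩ := costBack_spec u v (u.length - 1) (u.length - 1)
          u.length 0 cb (by omega) le_rfl (by rw [dur_zero]) (by intro i h1 h2; omega)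
          (by rw [show u.length - 1 + 1 = u.length from by omega]; exact hscanB)
        obtain ⟨b, hb1, hb2, hb3, hb4, hb5⟩ := costFront_spec u v u 0 0 cf
          (fun idx hidx => by rw [getD_omega u idx hidx, Nat.zero_add]) (by rw [dur_zero])
          (by intro i hi; omega) hscanF
        simp only [decide_eq_true_eq]
        -- total = dur a (L + b)
        have e1 : dur FT12 (omegaPath u 0) (u.length - 1) u.length
            = FT12 (omegaPath u 0 (u.length - 1)) (omegaPath u 0 u.length) := by
          have e0 := dur_single FT12 (omegaPath u 0) (u.length - 1)
          rw [show u.length - 1 + 1 = u.length from by omega] at e0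
          exact e0
        have hsplit1 : dur FT12 (omegaPath u 0) a (u.length - 1)
              + FT12 (omegaPath u 0 (u.length - 1)) (omegaPath u 0 (u.length))
            = dur FT12 (omegaPath u 0) a u.length := by
          rw [← e1]
          exact dur_split FT12 (omegaPath u 0) (by omega) (by omega)
        have hshift : dur FT12 (omegaPath u 0) u.length (u.length + b)
            = dur FT12 (omegaPath u 0) 0 b := by
          rw [dur_eq_range, dur_eq_range, Nat.add_sub_cancel_left, Nat.sub_zero]
          refine Finset.sum_congr rfl fun i _ => ?_
          rw [omega_congr u 0 (a := u.length + i) (b := 0 + i) (by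
              rw [Nat.add_mod_left, Nat.zero_add]),
            show u.length + i + 1 = u.length + (i + 1) from by omega,
            omega_congr u 0 (a := u.length + (i + 1)) (b := 0 + (i + 1)) (by
              rw [Nat.add_mod_left, Nat.zero_add]),
            Nat.zero_add, Nat.zero_add]
        have htotal : cb + FT12 (u.getD (u.length - 1) 0) (u.getD 0 0) + cf
            = dur FT12 (omegaPath u 0) a (u.length + b) := by
          rw [ha2, hb3, getD_omega u _ (by omega : u.length - 1 < u.length), hget0, ← hs0,
            ← dur_split FT12 (omegaPath u 0) (by omega : a ≤ u.length)
              (by omega : u.length ≤ u.length + b), ← hsplit1, hshift]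
        rw [htotal]
        -- apply the solution's gap condition from a to u.length + b
        refine gap_bound u h (by omega) ha3 ?_
        intro i hi1 hi2
        rcases Nat.lt_or_ge i u.length with hiu | hiu
        · exact ha4 i hi1 hiu
        · have hj : i - u.length < b := by omega
          have hmod : i % u.length = (i - u.length) % u.length := by
            conv_lhs => rw [show i = i - u.length + u.length from by omega]
            rw [Nat.add_mod_right]
          rw [omega_congr u 0 (a := i) (b := i - u.length) hmod]
          exact hb5 _ hj

lemma dfs_complete (u : List (Fin 4)) (h : IsSolution RD12 FT12 (omegaPath u 0)) :
    ∀ k, k ≤ u.length → dfs k ((u.take (u.length - k)).reverse) = true := by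
  intro k
  induction k with
  | zero =>
    intro _
    rw [Nat.sub_zero, List.take_length, dfs]
    exact wrap_sound u h
  | succ k ih =>
    intro hk
    have hm : u.length - (k + 1) < u.length := by omega
    rw [dfs, List.any_eq_true]
    refine ⟨u.getD (u.length - (k + 1)) 0, List.mem_finRange _, ?_⟩
    rw [Bool.and_eq_true]
    have hcons : u.getD (u.length - (k + 1)) 0 :: (u.take (u.length - (k + 1))).reverse
        = (u.take (u.length - (k + 1) + 1)).reverse :=
      (rev_take_succ u _ hm).symm
    constructor
    · rw [hcons]
      exact prune_sound u h _ (by omega)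
    · rw [hcons, show u.length - (k + 1) + 1 = u.length - k from by omega]
      exact ih (by omega)

set_option maxHeartbeats 20000000

lemma e_finRange : List.finRange 4 = [0, 1, 2, 3] := by decide

lemma dfs_succ (k : ℕ) (r : List (Fin 4)) :
    dfs (k + 1) r = (List.finRange 4).any fun a => pruneChk (a :: r) && dfs k (a :: r) := rfl

lemma dfsf_0_rnil : dfs 0 [] = false := by decide

lemma dfsf_1_rnil : dfs 1 [] = false := by decide

lemma dfsf_2_rnil : dfs 2 [] = false := by decide

lemma dfsf_3_rnil : dfs 3 [] = false := by decide

lemma dfsf_4_rnil : dfs 4 [] = false := by decide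

lemma dfsf_5_rnil : dfs 5 [] = false := by decide

lemma dfsf_5_r0 : dfs 5 [0] = false := by decide

lemma dfsf_5_r1 : dfs 5 [1] = false := by decide

lemma dfsf_5_r2 : dfs 5 [2] = false := by decide

lemma dfsf_5_r3 : dfs 5 [3] = false := by decide

lemma dfsf_6_rnil : dfs 6 [] = false := by
  rw [show (6 : ℕ) = 5 + 1 from rfl, dfs_succ, e_finRange]
  simp only [List.any_cons, List.any_nil, dfsf_5_r0,
    dfsf_5_r1,
    dfsf_5_r2,
    dfsf_5_r3,
    Bool.false_and, Bool.and_false, Bool.or_false, Bool.or_self]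

lemma dfsf_5_r10 : dfs 5 [1, 0] = false := by decide

lemma dfsf_5_r20 : dfs 5 [2, 0] = false := by decide

lemma dfsf_5_r30 : dfs 5 [3, 0] = false := by decide

lemma dfsf_6_r0 : dfs 6 [0] = false := by
  rw [show (6 : ℕ) = 5 + 1 from rfl, dfs_succ, e_finRange]
  simp only [List.any_cons, List.any_nil, (show pruneChk [0, 0] = false from by decide),
    dfsf_5_r10,
    dfsf_5_r20,
    dfsf_5_r30,
    Bool.false_and, Bool.and_false, Bool.or_false, Bool.or_self]

lemma dfsf_5_r01 : dfs 5 [0, 1] = false := by decide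

lemma dfsf_5_r21 : dfs 5 [2, 1] = false := by decide

lemma dfsf_5_r31 : dfs 5 [3, 1] = false := by decide

lemma dfsf_6_r1 : dfs 6 [1] = false := by
  rw [show (6 : ℕ) = 5 + 1 from rfl, dfs_succ, e_finRange]
  simp only [List.any_cons, List.any_nil, dfsf_5_r01,
    (show pruneChk [1, 1] = false from by decide),
    dfsf_5_r21,
    dfsf_5_r31,
    Bool.false_and, Bool.and_false, Bool.or_false, Bool.or_self]

lemma dfsf_5_r02 : dfs 5 [0, 2] = false := by decide

lemma dfsf_5_r12 : dfs 5 [1, 2] = false := by decide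

lemma dfsf_5_r32 : dfs 5 [3, 2] = false := by decide

lemma dfsf_6_r2 : dfs 6 [2] = false := by
  rw [show (6 : ℕ) = 5 + 1 from rfl, dfs_succ, e_finRange]
  simp only [List.any_cons, List.any_nil, dfsf_5_r02,
    dfsf_5_r12,
    (show pruneChk [2, 2] = false from by decide),
    dfsf_5_r32,
    Bool.false_and, Bool.and_false, Bool.or_false, Bool.or_self]

lemma dfsf_5_r03 : dfs 5 [0, 3] = false := by decide

lemma dfsf_5_r13 : dfs 5 [1, 3] = false := by decide

lemma dfsf_5_r23 : dfs 5 [2, 3] = false := by decide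

lemma dfsf_6_r3 : dfs 6 [3] = false := by
  rw [show (6 : ℕ) = 5 + 1 from rfl, dfs_succ, e_finRange]
  simp only [List.any_cons, List.any_nil, dfsf_5_r03,
    dfsf_5_r13,
    dfsf_5_r23,
    (show pruneChk [3, 3] = false from by decide),
    Bool.false_and, Bool.and_false, Bool.or_false, Bool.or_self]

lemma dfsf_7_rnil : dfs 7 [] = false := by
  rw [show (7 : ℕ) = 6 + 1 from rfl, dfs_succ, e_finRange]
  simp only [List.any_cons, List.any_nil, dfsf_6_r0,
    dfsf_6_r1,
    dfsf_6_r2,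
    dfsf_6_r3,
    Bool.false_and, Bool.and_false, Bool.or_false, Bool.or_self]

lemma dfsf_6_r10 : dfs 6 [1, 0] = false := by decide

lemma dfsf_6_r20 : dfs 6 [2, 0] = false := by decide

lemma dfsf_6_r30 : dfs 6 [3, 0] = false := by decide

lemma dfsf_7_r0 : dfs 7 [0] = false := by
  rw [show (7 : ℕ) = 6 + 1 from rfl, dfs_succ, e_finRange]
  simp only [List.any_cons, List.any_nil, (show pruneChk [0, 0] = false from by decide),
    dfsf_6_r10,
    dfsf_6_r20,
    dfsf_6_r30,
    Bool.false_and, Bool.and_false, Bool.or_false, Bool.or_self]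

lemma dfsf_6_r01 : dfs 6 [0, 1] = false := by decide

lemma dfsf_5_r021 : dfs 5 [0, 2, 1] = false := by decide

lemma dfsf_5_r121 : dfs 5 [1, 2, 1] = false := by decide

lemma dfsf_5_r321 : dfs 5 [3, 2, 1] = false := by decide

lemma dfsf_6_r21 : dfs 6 [2, 1] = false := by
  rw [show (6 : ℕ) = 5 + 1 from rfl, dfs_succ, e_finRange]
  simp only [List.any_cons, List.any_nil, dfsf_5_r021,
    dfsf_5_r121,
    (show pruneChk [2, 2, 1] = false from by decide),
    dfsf_5_r321,
    Bool.false_and, Bool.and_false, Bool.or_false, Bool.or_self]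

lemma dfsf_5_r031 : dfs 5 [0, 3, 1] = false := by decide

lemma dfsf_5_r131 : dfs 5 [1, 3, 1] = false := by decide

lemma dfsf_5_r231 : dfs 5 [2, 3, 1] = false := by decide

lemma dfsf_6_r31 : dfs 6 [3, 1] = false := by
  rw [show (6 : ℕ) = 5 + 1 from rfl, dfs_succ, e_finRange]
  simp only [List.any_cons, List.any_nil, dfsf_5_r031,
    dfsf_5_r131,
    dfsf_5_r231,
    (show pruneChk [3, 3, 1] = false from by decide),
    Bool.false_and, Bool.and_false, Bool.or_false, Bool.or_self]

lemma dfsf_7_r1 : dfs 7 [1] = false := by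
  rw [show (7 : ℕ) = 6 + 1 from rfl, dfs_succ, e_finRange]
  simp only [List.any_cons, List.any_nil, dfsf_6_r01,
    (show pruneChk [1, 1] = false from by decide),
    dfsf_6_r21,
    dfsf_6_r31,
    Bool.false_and, Bool.and_false, Bool.or_false, Bool.or_self]

lemma dfsf_6_r02 : dfs 6 [0, 2] = false := by decide

lemma dfsf_6_r12 : dfs 6 [1, 2] = false := by decide

lemma dfsf_5_r032 : dfs 5 [0, 3, 2] = false := by decide

lemma dfsf_5_r132 : dfs 5 [1, 3, 2] = false := by decide

lemma dfsf_5_r232 : dfs 5 [2, 3, 2] = false := by decide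

lemma dfsf_6_r32 : dfs 6 [3, 2] = false := by
  rw [show (6 : ℕ) = 5 + 1 from rfl, dfs_succ, e_finRange]
  simp only [List.any_cons, List.any_nil, dfsf_5_r032,
    dfsf_5_r132,
    dfsf_5_r232,
    (show pruneChk [3, 3, 2] = false from by decide),
    Bool.false_and, Bool.and_false, Bool.or_false, Bool.or_self]

lemma dfsf_7_r2 : dfs 7 [2] = false := by
  rw [show (7 : ℕ) = 6 + 1 from rfl, dfs_succ, e_finRange]
  simp only [List.any_cons, List.any_nil, dfsf_6_r02,
    dfsf_6_r12,
    (show pruneChk [2, 2] = false from by decide),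
    dfsf_6_r32,
    Bool.false_and, Bool.and_false, Bool.or_false, Bool.or_self]

lemma dfsf_6_r03 : dfs 6 [0, 3] = false := by decide

lemma dfsf_5_r013 : dfs 5 [0, 1, 3] = false := by decide

lemma dfsf_5_r213 : dfs 5 [2, 1, 3] = false := by decide

lemma dfsf_5_r313 : dfs 5 [3, 1, 3] = false := by decide

lemma dfsf_6_r13 : dfs 6 [1, 3] = false := by
  rw [show (6 : ℕ) = 5 + 1 from rfl, dfs_succ, e_finRange]
  simp only [List.any_cons, List.any_nil, dfsf_5_r013,
    (show pruneChk [1, 1, 3] = false from by decide),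
    dfsf_5_r213,
    dfsf_5_r313,
    Bool.false_and, Bool.and_false, Bool.or_false, Bool.or_self]

lemma dfsf_5_r023 : dfs 5 [0, 2, 3] = false := by decide

lemma dfsf_5_r123 : dfs 5 [1, 2, 3] = false := by decide

lemma dfsf_5_r323 : dfs 5 [3, 2, 3] = false := by decide

lemma dfsf_6_r23 : dfs 6 [2, 3] = false := by
  rw [show (6 : ℕ) = 5 + 1 from rfl, dfs_succ, e_finRange]
  simp only [List.any_cons, List.any_nil, dfsf_5_r023,
    dfsf_5_r123,
    (show pruneChk [2, 2, 3] = false from by decide),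
    dfsf_5_r323,
    Bool.false_and, Bool.and_false, Bool.or_false, Bool.or_self]

lemma dfsf_7_r3 : dfs 7 [3] = false := by
  rw [show (7 : ℕ) = 6 + 1 from rfl, dfs_succ, e_finRange]
  simp only [List.any_cons, List.any_nil, dfsf_6_r03,
    dfsf_6_r13,
    dfsf_6_r23,
    (show pruneChk [3, 3] = false from by decide),
    Bool.false_and, Bool.and_false, Bool.or_false, Bool.or_self]

lemma dfsf_8_rnil : dfs 8 [] = false := by
  rw [show (8 : ℕ) = 7 + 1 from rfl, dfs_succ, e_finRange]
  simp only [List.any_cons, List.any_nil, dfsf_7_r0,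
    dfsf_7_r1,
    dfsf_7_r2,
    dfsf_7_r3,
    Bool.false_and, Bool.and_false, Bool.or_false, Bool.or_self]

lemma dfsf_6_r010 : dfs 6 [0, 1, 0] = false := by decide

lemma dfsf_6_r210 : dfs 6 [2, 1, 0] = false := by decide

lemma dfsf_6_r310 : dfs 6 [3, 1, 0] = false := by decide

lemma dfsf_7_r10 : dfs 7 [1, 0] = false := by
  rw [show (7 : ℕ) = 6 + 1 from rfl, dfs_succ, e_finRange]
  simp only [List.any_cons, List.any_nil, dfsf_6_r010,
    (show pruneChk [1, 1, 0] = false from by decide),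
    dfsf_6_r210,
    dfsf_6_r310,
    Bool.false_and, Bool.and_false, Bool.or_false, Bool.or_self]

lemma dfsf_6_r020 : dfs 6 [0, 2, 0] = false := by decide

lemma dfsf_6_r120 : dfs 6 [1, 2, 0] = false := by decide

lemma dfsf_6_r320 : dfs 6 [3, 2, 0] = false := by decide

lemma dfsf_7_r20 : dfs 7 [2, 0] = false := by
  rw [show (7 : ℕ) = 6 + 1 from rfl, dfs_succ, e_finRange]
  simp only [List.any_cons, List.any_nil, dfsf_6_r020,
    dfsf_6_r120,
    (show pruneChk [2, 2, 0] = false from by decide),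
    dfsf_6_r320,
    Bool.false_and, Bool.and_false, Bool.or_false, Bool.or_self]

lemma dfsf_6_r030 : dfs 6 [0, 3, 0] = false := by decide

lemma dfsf_6_r130 : dfs 6 [1, 3, 0] = false := by decide

lemma dfsf_6_r230 : dfs 6 [2, 3, 0] = false := by decide

lemma dfsf_7_r30 : dfs 7 [3, 0] = false := by
  rw [show (7 : ℕ) = 6 + 1 from rfl, dfs_succ, e_finRange]
  simp only [List.any_cons, List.any_nil, dfsf_6_r030,
    dfsf_6_r130,
    dfsf_6_r230,
    (show pruneChk [3, 3, 0] = false from by decide),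
    Bool.false_and, Bool.and_false, Bool.or_false, Bool.or_self]

lemma dfsf_8_r0 : dfs 8 [0] = false := by
  rw [show (8 : ℕ) = 7 + 1 from rfl, dfs_succ, e_finRange]
  simp only [List.any_cons, List.any_nil, (show pruneChk [0, 0] = false from by decide),
    dfsf_7_r10,
    dfsf_7_r20,
    dfsf_7_r30,
    Bool.false_and, Bool.and_false, Bool.or_false, Bool.or_self]

lemma dfsf_6_r101 : dfs 6 [1, 0, 1] = false := by decide

lemma dfsf_6_r201 : dfs 6 [2, 0, 1] = false := by decide

lemma dfsf_6_r301 : dfs 6 [3, 0, 1] = false := by decide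

lemma dfsf_7_r01 : dfs 7 [0, 1] = false := by
  rw [show (7 : ℕ) = 6 + 1 from rfl, dfs_succ, e_finRange]
  simp only [List.any_cons, List.any_nil, (show pruneChk [0, 0, 1] = false from by decide),
    dfsf_6_r101,
    dfsf_6_r201,
    dfsf_6_r301,
    Bool.false_and, Bool.and_false, Bool.or_false, Bool.or_self]

lemma dfsf_6_r021 : dfs 6 [0, 2, 1] = false := by decide

lemma dfsf_6_r121 : dfs 6 [1, 2, 1] = false := by decide

lemma dfsf_6_r321 : dfs 6 [3, 2, 1] = false := by decide

lemma dfsf_7_r21 : dfs 7 [2, 1] = false := by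
  rw [show (7 : ℕ) = 6 + 1 from rfl, dfs_succ, e_finRange]
  simp only [List.any_cons, List.any_nil, dfsf_6_r021,
    dfsf_6_r121,
    (show pruneChk [2, 2, 1] = false from by decide),
    dfsf_6_r321,
    Bool.false_and, Bool.and_false, Bool.or_false, Bool.or_self]

lemma dfsf_6_r031 : dfs 6 [0, 3, 1] = false := by decide

lemma dfsf_5_r0131 : dfs 5 [0, 1, 3, 1] = false := by decide

lemma dfsf_5_r2131 : dfs 5 [2, 1, 3, 1] = false := by decide

lemma dfsf_5_r3131 : dfs 5 [3, 1, 3, 1] = false := by decide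

lemma dfsf_6_r131 : dfs 6 [1, 3, 1] = false := by
  rw [show (6 : ℕ) = 5 + 1 from rfl, dfs_succ, e_finRange]
  simp only [List.any_cons, List.any_nil, dfsf_5_r0131,
    (show pruneChk [1, 1, 3, 1] = false from by decide),
    dfsf_5_r2131,
    dfsf_5_r3131,
    Bool.false_and, Bool.and_false, Bool.or_false, Bool.or_self]

lemma dfsf_6_r231 : dfs 6 [2, 3, 1] = false := by decide

lemma dfsf_7_r31 : dfs 7 [3, 1] = false := by
  rw [show (7 : ℕ) = 6 + 1 from rfl, dfs_succ, e_finRange]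
  simp only [List.any_cons, List.any_nil, dfsf_6_r031,
    dfsf_6_r131,
    dfsf_6_r231,
    (show pruneChk [3, 3, 1] = false from by decide),
    Bool.false_and, Bool.and_false, Bool.or_false, Bool.or_self]

lemma dfsf_8_r1 : dfs 8 [1] = false := by
  rw [show (8 : ℕ) = 7 + 1 from rfl, dfs_succ, e_finRange]
  simp only [List.any_cons, List.any_nil, dfsf_7_r01,
    (show pruneChk [1, 1] = false from by decide),
    dfsf_7_r21,
    dfsf_7_r31,
    Bool.false_and, Bool.and_false, Bool.or_false, Bool.or_self]

lemma dfsf_6_r102 : dfs 6 [1, 0, 2] = false := by decide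

lemma dfsf_6_r202 : dfs 6 [2, 0, 2] = false := by decide

lemma dfsf_6_r302 : dfs 6 [3, 0, 2] = false := by decide

lemma dfsf_7_r02 : dfs 7 [0, 2] = false := by
  rw [show (7 : ℕ) = 6 + 1 from rfl, dfs_succ, e_finRange]
  simp only [List.any_cons, List.any_nil, (show pruneChk [0, 0, 2] = false from by decide),
    dfsf_6_r102,
    dfsf_6_r202,
    dfsf_6_r302,
    Bool.false_and, Bool.and_false, Bool.or_false, Bool.or_self]

lemma dfsf_6_r012 : dfs 6 [0, 1, 2] = false := by decide

lemma dfsf_5_r0212 : dfs 5 [0, 2, 1, 2] = false := by decide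

lemma dfsf_5_r1212 : dfs 5 [1, 2, 1, 2] = false := by decide

lemma dfsf_5_r3212 : dfs 5 [3, 2, 1, 2] = false := by decide

lemma dfsf_6_r212 : dfs 6 [2, 1, 2] = false := by
  rw [show (6 : ℕ) = 5 + 1 from rfl, dfs_succ, e_finRange]
  simp only [List.any_cons, List.any_nil, dfsf_5_r0212,
    dfsf_5_r1212,
    (show pruneChk [2, 2, 1, 2] = false from by decide),
    dfsf_5_r3212,
    Bool.false_and, Bool.and_false, Bool.or_false, Bool.or_self]

lemma dfsf_6_r312 : dfs 6 [3, 1, 2] = false := by decide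

lemma dfsf_7_r12 : dfs 7 [1, 2] = false := by
  rw [show (7 : ℕ) = 6 + 1 from rfl, dfs_succ, e_finRange]
  simp only [List.any_cons, List.any_nil, dfsf_6_r012,
    (show pruneChk [1, 1, 2] = false from by decide),
    dfsf_6_r212,
    dfsf_6_r312,
    Bool.false_and, Bool.and_false, Bool.or_false, Bool.or_self]

lemma dfsf_6_r032 : dfs 6 [0, 3, 2] = false := by decide

lemma dfsf_6_r132 : dfs 6 [1, 3, 2] = false := by decide

lemma dfsf_5_r0232 : dfs 5 [0, 2, 3, 2] = false := by decide

lemma dfsf_5_r1232 : dfs 5 [1, 2, 3, 2] = false := by decide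

lemma dfsf_5_r3232 : dfs 5 [3, 2, 3, 2] = false := by decide

lemma dfsf_6_r232 : dfs 6 [2, 3, 2] = false := by
  rw [show (6 : ℕ) = 5 + 1 from rfl, dfs_succ, e_finRange]
  simp only [List.any_cons, List.any_nil, dfsf_5_r0232,
    dfsf_5_r1232,
    (show pruneChk [2, 2, 3, 2] = false from by decide),
    dfsf_5_r3232,
    Bool.false_and, Bool.and_false, Bool.or_false, Bool.or_self]

lemma dfsf_7_r32 : dfs 7 [3, 2] = false := by
  rw [show (7 : ℕ) = 6 + 1 from rfl, dfs_succ, e_finRange]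
  simp only [List.any_cons, List.any_nil, dfsf_6_r032,
    dfsf_6_r132,
    dfsf_6_r232,
    (show pruneChk [3, 3, 2] = false from by decide),
    Bool.false_and, Bool.and_false, Bool.or_false, Bool.or_self]

lemma dfsf_8_r2 : dfs 8 [2] = false := by
  rw [show (8 : ℕ) = 7 + 1 from rfl, dfs_succ, e_finRange]
  simp only [List.any_cons, List.any_nil, dfsf_7_r02,
    dfsf_7_r12,
    (show pruneChk [2, 2] = false from by decide),
    dfsf_7_r32,
    Bool.false_and, Bool.and_false, Bool.or_false, Bool.or_self]

lemma dfsf_6_r103 : dfs 6 [1, 0, 3] = false := by decide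

lemma dfsf_6_r203 : dfs 6 [2, 0, 3] = false := by decide

lemma dfsf_6_r303 : dfs 6 [3, 0, 3] = false := by decide

lemma dfsf_7_r03 : dfs 7 [0, 3] = false := by
  rw [show (7 : ℕ) = 6 + 1 from rfl, dfs_succ, e_finRange]
  simp only [List.any_cons, List.any_nil, (show pruneChk [0, 0, 3] = false from by decide),
    dfsf_6_r103,
    dfsf_6_r203,
    dfsf_6_r303,
    Bool.false_and, Bool.and_false, Bool.or_false, Bool.or_self]

lemma dfsf_6_r013 : dfs 6 [0, 1, 3] = false := by decide

lemma dfsf_6_r213 : dfs 6 [2, 1, 3] = false := by decide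

lemma dfsf_5_r0313 : dfs 5 [0, 3, 1, 3] = false := by decide

lemma dfsf_5_r1313 : dfs 5 [1, 3, 1, 3] = false := by decide

lemma dfsf_5_r2313 : dfs 5 [2, 3, 1, 3] = false := by decide

lemma dfsf_6_r313 : dfs 6 [3, 1, 3] = false := by
  rw [show (6 : ℕ) = 5 + 1 from rfl, dfs_succ, e_finRange]
  simp only [List.any_cons, List.any_nil, dfsf_5_r0313,
    dfsf_5_r1313,
    dfsf_5_r2313,
    (show pruneChk [3, 3, 1, 3] = false from by decide),
    Bool.false_and, Bool.and_false, Bool.or_false, Bool.or_self]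

lemma dfsf_7_r13 : dfs 7 [1, 3] = false := by
  rw [show (7 : ℕ) = 6 + 1 from rfl, dfs_succ, e_finRange]
  simp only [List.any_cons, List.any_nil, dfsf_6_r013,
    (show pruneChk [1, 1, 3] = false from by decide),
    dfsf_6_r213,
    dfsf_6_r313,
    Bool.false_and, Bool.and_false, Bool.or_false, Bool.or_self]

lemma dfsf_6_r023 : dfs 6 [0, 2, 3] = false := by decide

lemma dfsf_6_r123 : dfs 6 [1, 2, 3] = false := by decide

lemma dfsf_5_r0323 : dfs 5 [0, 3, 2, 3] = false := by decide

lemma dfsf_5_r1323 : dfs 5 [1, 3, 2, 3] = false := by decide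

lemma dfsf_5_r2323 : dfs 5 [2, 3, 2, 3] = false := by decide

lemma dfsf_6_r323 : dfs 6 [3, 2, 3] = false := by
  rw [show (6 : ℕ) = 5 + 1 from rfl, dfs_succ, e_finRange]
  simp only [List.any_cons, List.any_nil, dfsf_5_r0323,
    dfsf_5_r1323,
    dfsf_5_r2323,
    (show pruneChk [3, 3, 2, 3] = false from by decide),
    Bool.false_and, Bool.and_false, Bool.or_false, Bool.or_self]

lemma dfsf_7_r23 : dfs 7 [2, 3] = false := by
  rw [show (7 : ℕ) = 6 + 1 from rfl, dfs_succ, e_finRange]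
  simp only [List.any_cons, List.any_nil, dfsf_6_r023,
    dfsf_6_r123,
    (show pruneChk [2, 2, 3] = false from by decide),
    dfsf_6_r323,
    Bool.false_and, Bool.and_false, Bool.or_false, Bool.or_self]

lemma dfsf_8_r3 : dfs 8 [3] = false := by
  rw [show (8 : ℕ) = 7 + 1 from rfl, dfs_succ, e_finRange]
  simp only [List.any_cons, List.any_nil, dfsf_7_r03,
    dfsf_7_r13,
    dfsf_7_r23,
    (show pruneChk [3, 3] = false from by decide),
    Bool.false_and, Bool.and_false, Bool.or_false, Bool.or_self]

lemma dfsf_9_rnil : dfs 9 [] = false := by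
  rw [show (9 : ℕ) = 8 + 1 from rfl, dfs_succ, e_finRange]
  simp only [List.any_cons, List.any_nil, dfsf_8_r0,
    dfsf_8_r1,
    dfsf_8_r2,
    dfsf_8_r3,
    Bool.false_and, Bool.and_false, Bool.or_false, Bool.or_self]

lemma dfsf_6_r1010 : dfs 6 [1, 0, 1, 0] = false := by decide

lemma dfsf_6_r2010 : dfs 6 [2, 0, 1, 0] = false := by decide

lemma dfsf_6_r3010 : dfs 6 [3, 0, 1, 0] = false := by decide

lemma dfsf_7_r010 : dfs 7 [0, 1, 0] = false := by
  rw [show (7 : ℕ) = 6 + 1 from rfl, dfs_succ, e_finRange]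
  simp only [List.any_cons, List.any_nil, (show pruneChk [0, 0, 1, 0] = false from by decide),
    dfsf_6_r1010,
    dfsf_6_r2010,
    dfsf_6_r3010,
    Bool.false_and, Bool.and_false, Bool.or_false, Bool.or_self]

lemma dfsf_7_r210 : dfs 7 [2, 1, 0] = false := by decide

lemma dfsf_7_r310 : dfs 7 [3, 1, 0] = false := by decide

lemma dfsf_8_r10 : dfs 8 [1, 0] = false := by
  rw [show (8 : ℕ) = 7 + 1 from rfl, dfs_succ, e_finRange]
  simp only [List.any_cons, List.any_nil, dfsf_7_r010,
    (show pruneChk [1, 1, 0] = false from by decide),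
    dfsf_7_r210,
    dfsf_7_r310,
    Bool.false_and, Bool.and_false, Bool.or_false, Bool.or_self]

lemma dfsf_6_r1020 : dfs 6 [1, 0, 2, 0] = false := by decide

lemma dfsf_6_r2020 : dfs 6 [2, 0, 2, 0] = false := by decide

lemma dfsf_6_r3020 : dfs 6 [3, 0, 2, 0] = false := by decide

lemma dfsf_7_r020 : dfs 7 [0, 2, 0] = false := by
  rw [show (7 : ℕ) = 6 + 1 from rfl, dfs_succ, e_finRange]
  simp only [List.any_cons, List.any_nil, (show pruneChk [0, 0, 2, 0] = false from by decide),
    dfsf_6_r1020,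
    dfsf_6_r2020,
    dfsf_6_r3020,
    Bool.false_and, Bool.and_false, Bool.or_false, Bool.or_self]

lemma dfsf_7_r120 : dfs 7 [1, 2, 0] = false := by decide

lemma dfsf_7_r320 : dfs 7 [3, 2, 0] = false := by decide

lemma dfsf_8_r20 : dfs 8 [2, 0] = false := by
  rw [show (8 : ℕ) = 7 + 1 from rfl, dfs_succ, e_finRange]
  simp only [List.any_cons, List.any_nil, dfsf_7_r020,
    dfsf_7_r120,
    (show pruneChk [2, 2, 0] = false from by decide),
    dfsf_7_r320,
    Bool.false_and, Bool.and_false, Bool.or_false, Bool.or_self]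

lemma dfsf_6_r1030 : dfs 6 [1, 0, 3, 0] = false := by decide

lemma dfsf_6_r2030 : dfs 6 [2, 0, 3, 0] = false := by decide

lemma dfsf_6_r3030 : dfs 6 [3, 0, 3, 0] = false := by decide

lemma dfsf_7_r030 : dfs 7 [0, 3, 0] = false := by
  rw [show (7 : ℕ) = 6 + 1 from rfl, dfs_succ, e_finRange]
  simp only [List.any_cons, List.any_nil, (show pruneChk [0, 0, 3, 0] = false from by decide),
    dfsf_6_r1030,
    dfsf_6_r2030,
    dfsf_6_r3030,
    Bool.false_and, Bool.and_false, Bool.or_false, Bool.or_self]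

lemma dfsf_7_r130 : dfs 7 [1, 3, 0] = false := by decide

lemma dfsf_7_r230 : dfs 7 [2, 3, 0] = false := by decide

lemma dfsf_8_r30 : dfs 8 [3, 0] = false := by
  rw [show (8 : ℕ) = 7 + 1 from rfl, dfs_succ, e_finRange]
  simp only [List.any_cons, List.any_nil, dfsf_7_r030,
    dfsf_7_r130,
    dfsf_7_r230,
    (show pruneChk [3, 3, 0] = false from by decide),
    Bool.false_and, Bool.and_false, Bool.or_false, Bool.or_self]

lemma dfsf_9_r0 : dfs 9 [0] = false := by
  rw [show (9 : ℕ) = 8 + 1 from rfl, dfs_succ, e_finRange]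
  simp only [List.any_cons, List.any_nil, (show pruneChk [0, 0] = false from by decide),
    dfsf_8_r10,
    dfsf_8_r20,
    dfsf_8_r30,
    Bool.false_and, Bool.and_false, Bool.or_false, Bool.or_self]

lemma dfsf_6_r0101 : dfs 6 [0, 1, 0, 1] = false := by decide

lemma dfsf_6_r2101 : dfs 6 [2, 1, 0, 1] = false := by decide

lemma dfsf_6_r3101 : dfs 6 [3, 1, 0, 1] = false := by decide

lemma dfsf_7_r101 : dfs 7 [1, 0, 1] = false := by
  rw [show (7 : ℕ) = 6 + 1 from rfl, dfs_succ, e_finRange]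
  simp only [List.any_cons, List.any_nil, dfsf_6_r0101,
    (show pruneChk [1, 1, 0, 1] = false from by decide),
    dfsf_6_r2101,
    dfsf_6_r3101,
    Bool.false_and, Bool.and_false, Bool.or_false, Bool.or_self]

lemma dfsf_7_r201 : dfs 7 [2, 0, 1] = false := by decide

lemma dfsf_6_r0301 : dfs 6 [0, 3, 0, 1] = false := by decide

lemma dfsf_6_r1301 : dfs 6 [1, 3, 0, 1] = false := by decide

lemma dfsf_6_r2301 : dfs 6 [2, 3, 0, 1] = false := by decide

lemma dfsf_7_r301 : dfs 7 [3, 0, 1] = false := by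
  rw [show (7 : ℕ) = 6 + 1 from rfl, dfs_succ, e_finRange]
  simp only [List.any_cons, List.any_nil, dfsf_6_r0301,
    dfsf_6_r1301,
    dfsf_6_r2301,
    (show pruneChk [3, 3, 0, 1] = false from by decide),
    Bool.false_and, Bool.and_false, Bool.or_false, Bool.or_self]

lemma dfsf_8_r01 : dfs 8 [0, 1] = false := by
  rw [show (8 : ℕ) = 7 + 1 from rfl, dfs_succ, e_finRange]
  simp only [List.any_cons, List.any_nil, (show pruneChk [0, 0, 1] = false from by decide),
    dfsf_7_r101,
    dfsf_7_r201,
    dfsf_7_r301,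
    Bool.false_and, Bool.and_false, Bool.or_false, Bool.or_self]

lemma dfsf_7_r021 : dfs 7 [0, 2, 1] = false := by decide

lemma dfsf_6_r0121 : dfs 6 [0, 1, 2, 1] = false := by decide

lemma dfsf_5_r02121 : dfs 5 [0, 2, 1, 2, 1] = false := by decide

lemma dfsf_5_r12121 : dfs 5 [1, 2, 1, 2, 1] = false := by decide

lemma dfsf_5_r32121 : dfs 5 [3, 2, 1, 2, 1] = false := by decide

lemma dfsf_6_r2121 : dfs 6 [2, 1, 2, 1] = false := by
  rw [show (6 : ℕ) = 5 + 1 from rfl, dfs_succ, e_finRange]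
  simp only [List.any_cons, List.any_nil, dfsf_5_r02121,
    dfsf_5_r12121,
    (show pruneChk [2, 2, 1, 2, 1] = false from by decide),
    dfsf_5_r32121,
    Bool.false_and, Bool.and_false, Bool.or_false, Bool.or_self]

lemma dfsf_6_r3121 : dfs 6 [3, 1, 2, 1] = false := by decide

lemma dfsf_7_r121 : dfs 7 [1, 2, 1] = false := by
  rw [show (7 : ℕ) = 6 + 1 from rfl, dfs_succ, e_finRange]
  simp only [List.any_cons, List.any_nil, dfsf_6_r0121,
    (show pruneChk [1, 1, 2, 1] = false from by decide),
    dfsf_6_r2121,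
    dfsf_6_r3121,
    Bool.false_and, Bool.and_false, Bool.or_false, Bool.or_self]

lemma dfsf_6_r0321 : dfs 6 [0, 3, 2, 1] = false := by decide

lemma dfsf_6_r1321 : dfs 6 [1, 3, 2, 1] = false := by decide

lemma dfsf_6_r2321 : dfs 6 [2, 3, 2, 1] = false := by decide

lemma dfsf_7_r321 : dfs 7 [3, 2, 1] = false := by
  rw [show (7 : ℕ) = 6 + 1 from rfl, dfs_succ, e_finRange]
  simp only [List.any_cons, List.any_nil, dfsf_6_r0321,
    dfsf_6_r1321,
    dfsf_6_r2321,
    (show pruneChk [3, 3, 2, 1] = false from by decide),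
    Bool.false_and, Bool.and_false, Bool.or_false, Bool.or_self]

lemma dfsf_8_r21 : dfs 8 [2, 1] = false := by
  rw [show (8 : ℕ) = 7 + 1 from rfl, dfs_succ, e_finRange]
  simp only [List.any_cons, List.any_nil, dfsf_7_r021,
    dfsf_7_r121,
    (show pruneChk [2, 2, 1] = false from by decide),
    dfsf_7_r321,
    Bool.false_and, Bool.and_false, Bool.or_false, Bool.or_self]

lemma dfsf_6_r1031 : dfs 6 [1, 0, 3, 1] = false := by decide

lemma dfsf_6_r2031 : dfs 6 [2, 0, 3, 1] = false := by decide

lemma dfsf_6_r3031 : dfs 6 [3, 0, 3, 1] = false := by decide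

lemma dfsf_7_r031 : dfs 7 [0, 3, 1] = false := by
  rw [show (7 : ℕ) = 6 + 1 from rfl, dfs_succ, e_finRange]
  simp only [List.any_cons, List.any_nil, (show pruneChk [0, 0, 3, 1] = false from by decide),
    dfsf_6_r1031,
    dfsf_6_r2031,
    dfsf_6_r3031,
    Bool.false_and, Bool.and_false, Bool.or_false, Bool.or_self]

lemma dfsf_6_r0131 : dfs 6 [0, 1, 3, 1] = false := by decide

lemma dfsf_6_r2131 : dfs 6 [2, 1, 3, 1] = false := by decide

lemma dfsf_5_r03131 : dfs 5 [0, 3, 1, 3, 1] = false := by decide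

lemma dfsf_5_r13131 : dfs 5 [1, 3, 1, 3, 1] = false := by decide

lemma dfsf_5_r23131 : dfs 5 [2, 3, 1, 3, 1] = false := by decide

lemma dfsf_6_r3131 : dfs 6 [3, 1, 3, 1] = false := by
  rw [show (6 : ℕ) = 5 + 1 from rfl, dfs_succ, e_finRange]
  simp only [List.any_cons, List.any_nil, dfsf_5_r03131,
    dfsf_5_r13131,
    dfsf_5_r23131,
    (show pruneChk [3, 3, 1, 3, 1] = false from by decide),
    Bool.false_and, Bool.and_false, Bool.or_false, Bool.or_self]

lemma dfsf_7_r131 : dfs 7 [1, 3, 1] = false := by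
  rw [show (7 : ℕ) = 6 + 1 from rfl, dfs_succ, e_finRange]
  simp only [List.any_cons, List.any_nil, dfsf_6_r0131,
    (show pruneChk [1, 1, 3, 1] = false from by decide),
    dfsf_6_r2131,
    dfsf_6_r3131,
    Bool.false_and, Bool.and_false, Bool.or_false, Bool.or_self]

lemma dfsf_6_r0231 : dfs 6 [0, 2, 3, 1] = false := by decide

lemma dfsf_6_r1231 : dfs 6 [1, 2, 3, 1] = false := by decide

lemma dfsf_6_r3231 : dfs 6 [3, 2, 3, 1] = false := by decide

lemma dfsf_7_r231 : dfs 7 [2, 3, 1] = false := by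
  rw [show (7 : ℕ) = 6 + 1 from rfl, dfs_succ, e_finRange]
  simp only [List.any_cons, List.any_nil, dfsf_6_r0231,
    dfsf_6_r1231,
    (show pruneChk [2, 2, 3, 1] = false from by decide),
    dfsf_6_r3231,
    Bool.false_and, Bool.and_false, Bool.or_false, Bool.or_self]

lemma dfsf_8_r31 : dfs 8 [3, 1] = false := by
  rw [show (8 : ℕ) = 7 + 1 from rfl, dfs_succ, e_finRange]
  simp only [List.any_cons, List.any_nil, dfsf_7_r031,
    dfsf_7_r131,
    dfsf_7_r231,
    (show pruneChk [3, 3, 1] = false from by decide),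
    Bool.false_and, Bool.and_false, Bool.or_false, Bool.or_self]

lemma dfsf_9_r1 : dfs 9 [1] = false := by
  rw [show (9 : ℕ) = 8 + 1 from rfl, dfs_succ, e_finRange]
  simp only [List.any_cons, List.any_nil, dfsf_8_r01,
    (show pruneChk [1, 1] = false from by decide),
    dfsf_8_r21,
    dfsf_8_r31,
    Bool.false_and, Bool.and_false, Bool.or_false, Bool.or_self]

lemma dfsf_7_r102 : dfs 7 [1, 0, 2] = false := by decide

lemma dfsf_6_r0202 : dfs 6 [0, 2, 0, 2] = false := by decide

lemma dfsf_6_r1202 : dfs 6 [1, 2, 0, 2] = false := by decide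

lemma dfsf_6_r3202 : dfs 6 [3, 2, 0, 2] = false := by decide

lemma dfsf_7_r202 : dfs 7 [2, 0, 2] = false := by
  rw [show (7 : ℕ) = 6 + 1 from rfl, dfs_succ, e_finRange]
  simp only [List.any_cons, List.any_nil, dfsf_6_r0202,
    dfsf_6_r1202,
    (show pruneChk [2, 2, 0, 2] = false from by decide),
    dfsf_6_r3202,
    Bool.false_and, Bool.and_false, Bool.or_false, Bool.or_self]

lemma dfsf_7_r302 : dfs 7 [3, 0, 2] = false := by decide

lemma dfsf_8_r02 : dfs 8 [0, 2] = false := by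
  rw [show (8 : ℕ) = 7 + 1 from rfl, dfs_succ, e_finRange]
  simp only [List.any_cons, List.any_nil, (show pruneChk [0, 0, 2] = false from by decide),
    dfsf_7_r102,
    dfsf_7_r202,
    dfsf_7_r302,
    Bool.false_and, Bool.and_false, Bool.or_false, Bool.or_self]

lemma dfsf_7_r012 : dfs 7 [0, 1, 2] = false := by decide

lemma dfsf_6_r0212 : dfs 6 [0, 2, 1, 2] = false := by decide

lemma dfsf_6_r1212 : dfs 6 [1, 2, 1, 2] = false := by decide

lemma dfsf_6_r3212 : dfs 6 [3, 2, 1, 2] = false := by decide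

lemma dfsf_7_r212 : dfs 7 [2, 1, 2] = false := by
  rw [show (7 : ℕ) = 6 + 1 from rfl, dfs_succ, e_finRange]
  simp only [List.any_cons, List.any_nil, dfsf_6_r0212,
    dfsf_6_r1212,
    (show pruneChk [2, 2, 1, 2] = false from by decide),
    dfsf_6_r3212,
    Bool.false_and, Bool.and_false, Bool.or_false, Bool.or_self]

lemma dfsf_7_r312 : dfs 7 [3, 1, 2] = false := by decide

lemma dfsf_8_r12 : dfs 8 [1, 2] = false := by
  rw [show (8 : ℕ) = 7 + 1 from rfl, dfs_succ, e_finRange]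
  simp only [List.any_cons, List.any_nil, dfsf_7_r012,
    (show pruneChk [1, 1, 2] = false from by decide),
    dfsf_7_r212,
    dfsf_7_r312,
    Bool.false_and, Bool.and_false, Bool.or_false, Bool.or_self]

lemma dfsf_7_r032 : dfs 7 [0, 3, 2] = false := by decide

lemma dfsf_6_r0132 : dfs 6 [0, 1, 3, 2] = false := by decide

lemma dfsf_6_r2132 : dfs 6 [2, 1, 3, 2] = false := by decide

lemma dfsf_6_r3132 : dfs 6 [3, 1, 3, 2] = false := by decide

lemma dfsf_7_r132 : dfs 7 [1, 3, 2] = false := by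
  rw [show (7 : ℕ) = 6 + 1 from rfl, dfs_succ, e_finRange]
  simp only [List.any_cons, List.any_nil, dfsf_6_r0132,
    (show pruneChk [1, 1, 3, 2] = false from by decide),
    dfsf_6_r2132,
    dfsf_6_r3132,
    Bool.false_and, Bool.and_false, Bool.or_false, Bool.or_self]

lemma dfsf_6_r0232 : dfs 6 [0, 2, 3, 2] = false := by decide

lemma dfsf_6_r1232 : dfs 6 [1, 2, 3, 2] = false := by decide

lemma dfsf_5_r03232 : dfs 5 [0, 3, 2, 3, 2] = false := by decide

lemma dfsf_5_r13232 : dfs 5 [1, 3, 2, 3, 2] = false := by decide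

lemma dfsf_5_r23232 : dfs 5 [2, 3, 2, 3, 2] = false := by decide

lemma dfsf_6_r3232 : dfs 6 [3, 2, 3, 2] = false := by
  rw [show (6 : ℕ) = 5 + 1 from rfl, dfs_succ, e_finRange]
  simp only [List.any_cons, List.any_nil, dfsf_5_r03232,
    dfsf_5_r13232,
    dfsf_5_r23232,
    (show pruneChk [3, 3, 2, 3, 2] = false from by decide),
    Bool.false_and, Bool.and_false, Bool.or_false, Bool.or_self]

lemma dfsf_7_r232 : dfs 7 [2, 3, 2] = false := by
  rw [show (7 : ℕ) = 6 + 1 from rfl, dfs_succ, e_finRange]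
  simp only [List.any_cons, List.any_nil, dfsf_6_r0232,
    dfsf_6_r1232,
    (show pruneChk [2, 2, 3, 2] = false from by decide),
    dfsf_6_r3232,
    Bool.false_and, Bool.and_false, Bool.or_false, Bool.or_self]

lemma dfsf_8_r32 : dfs 8 [3, 2] = false := by
  rw [show (8 : ℕ) = 7 + 1 from rfl, dfs_succ, e_finRange]
  simp only [List.any_cons, List.any_nil, dfsf_7_r032,
    dfsf_7_r132,
    dfsf_7_r232,
    (show pruneChk [3, 3, 2] = false from by decide),
    Bool.false_and, Bool.and_false, Bool.or_false, Bool.or_self]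

lemma dfsf_9_r2 : dfs 9 [2] = false := by
  rw [show (9 : ℕ) = 8 + 1 from rfl, dfs_succ, e_finRange]
  simp only [List.any_cons, List.any_nil, dfsf_8_r02,
    dfsf_8_r12,
    (show pruneChk [2, 2] = false from by decide),
    dfsf_8_r32,
    Bool.false_and, Bool.and_false, Bool.or_false, Bool.or_self]

lemma dfsf_6_r0103 : dfs 6 [0, 1, 0, 3] = false := by decide

lemma dfsf_6_r2103 : dfs 6 [2, 1, 0, 3] = false := by decide

lemma dfsf_6_r3103 : dfs 6 [3, 1, 0, 3] = false := by decide

lemma dfsf_7_r103 : dfs 7 [1, 0, 3] = false := by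
  rw [show (7 : ℕ) = 6 + 1 from rfl, dfs_succ, e_finRange]
  simp only [List.any_cons, List.any_nil, dfsf_6_r0103,
    (show pruneChk [1, 1, 0, 3] = false from by decide),
    dfsf_6_r2103,
    dfsf_6_r3103,
    Bool.false_and, Bool.and_false, Bool.or_false, Bool.or_self]

lemma dfsf_7_r203 : dfs 7 [2, 0, 3] = false := by decide

lemma dfsf_6_r0303 : dfs 6 [0, 3, 0, 3] = false := by decide

lemma dfsf_6_r1303 : dfs 6 [1, 3, 0, 3] = false := by decide

lemma dfsf_6_r2303 : dfs 6 [2, 3, 0, 3] = false := by decide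

lemma dfsf_7_r303 : dfs 7 [3, 0, 3] = false := by
  rw [show (7 : ℕ) = 6 + 1 from rfl, dfs_succ, e_finRange]
  simp only [List.any_cons, List.any_nil, dfsf_6_r0303,
    dfsf_6_r1303,
    dfsf_6_r2303,
    (show pruneChk [3, 3, 0, 3] = false from by decide),
    Bool.false_and, Bool.and_false, Bool.or_false, Bool.or_self]

lemma dfsf_8_r03 : dfs 8 [0, 3] = false := by
  rw [show (8 : ℕ) = 7 + 1 from rfl, dfs_succ, e_finRange]
  simp only [List.any_cons, List.any_nil, (show pruneChk [0, 0, 3] = false from by decide),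
    dfsf_7_r103,
    dfsf_7_r203,
    dfsf_7_r303,
    Bool.false_and, Bool.and_false, Bool.or_false, Bool.or_self]

lemma dfsf_6_r1013 : dfs 6 [1, 0, 1, 3] = false := by decide

lemma dfsf_6_r2013 : dfs 6 [2, 0, 1, 3] = false := by decide

lemma dfsf_6_r3013 : dfs 6 [3, 0, 1, 3] = false := by decide

lemma dfsf_7_r013 : dfs 7 [0, 1, 3] = false := by
  rw [show (7 : ℕ) = 6 + 1 from rfl, dfs_succ, e_finRange]
  simp only [List.any_cons, List.any_nil, (show pruneChk [0, 0, 1, 3] = false from by decide),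
    dfsf_6_r1013,
    dfsf_6_r2013,
    dfsf_6_r3013,
    Bool.false_and, Bool.and_false, Bool.or_false, Bool.or_self]

lemma dfsf_6_r0213 : dfs 6 [0, 2, 1, 3] = false := by decide

lemma dfsf_6_r1213 : dfs 6 [1, 2, 1, 3] = false := by decide

lemma dfsf_6_r3213 : dfs 6 [3, 2, 1, 3] = false := by decide

lemma dfsf_7_r213 : dfs 7 [2, 1, 3] = false := by
  rw [show (7 : ℕ) = 6 + 1 from rfl, dfs_succ, e_finRange]
  simp only [List.any_cons, List.any_nil, dfsf_6_r0213,
    dfsf_6_r1213,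
    (show pruneChk [2, 2, 1, 3] = false from by decide),
    dfsf_6_r3213,
    Bool.false_and, Bool.and_false, Bool.or_false, Bool.or_self]

lemma dfsf_6_r0313 : dfs 6 [0, 3, 1, 3] = false := by decide

lemma dfsf_5_r01313 : dfs 5 [0, 1, 3, 1, 3] = false := by decide

lemma dfsf_5_r21313 : dfs 5 [2, 1, 3, 1, 3] = false := by decide

lemma dfsf_5_r31313 : dfs 5 [3, 1, 3, 1, 3] = false := by decide

lemma dfsf_6_r1313 : dfs 6 [1, 3, 1, 3] = false := by
  rw [show (6 : ℕ) = 5 + 1 from rfl, dfs_succ, e_finRange]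
  simp only [List.any_cons, List.any_nil, dfsf_5_r01313,
    (show pruneChk [1, 1, 3, 1, 3] = false from by decide),
    dfsf_5_r21313,
    dfsf_5_r31313,
    Bool.false_and, Bool.and_false, Bool.or_false, Bool.or_self]

lemma dfsf_6_r2313 : dfs 6 [2, 3, 1, 3] = false := by decide

lemma dfsf_7_r313 : dfs 7 [3, 1, 3] = false := by
  rw [show (7 : ℕ) = 6 + 1 from rfl, dfs_succ, e_finRange]
  simp only [List.any_cons, List.any_nil, dfsf_6_r0313,
    dfsf_6_r1313,
    dfsf_6_r2313,
    (show pruneChk [3, 3, 1, 3] = false from by decide),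
    Bool.false_and, Bool.and_false, Bool.or_false, Bool.or_self]

lemma dfsf_8_r13 : dfs 8 [1, 3] = false := by
  rw [show (8 : ℕ) = 7 + 1 from rfl, dfs_succ, e_finRange]
  simp only [List.any_cons, List.any_nil, dfsf_7_r013,
    (show pruneChk [1, 1, 3] = false from by decide),
    dfsf_7_r213,
    dfsf_7_r313,
    Bool.false_and, Bool.and_false, Bool.or_false, Bool.or_self]

lemma dfsf_7_r023 : dfs 7 [0, 2, 3] = false := by decide

lemma dfsf_6_r0123 : dfs 6 [0, 1, 2, 3] = false := by decide

lemma dfsf_6_r2123 : dfs 6 [2, 1, 2, 3] = false := by decide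

lemma dfsf_6_r3123 : dfs 6 [3, 1, 2, 3] = false := by decide

lemma dfsf_7_r123 : dfs 7 [1, 2, 3] = false := by
  rw [show (7 : ℕ) = 6 + 1 from rfl, dfs_succ, e_finRange]
  simp only [List.any_cons, List.any_nil, dfsf_6_r0123,
    (show pruneChk [1, 1, 2, 3] = false from by decide),
    dfsf_6_r2123,
    dfsf_6_r3123,
    Bool.false_and, Bool.and_false, Bool.or_false, Bool.or_self]

lemma dfsf_6_r0323 : dfs 6 [0, 3, 2, 3] = false := by decide

lemma dfsf_6_r1323 : dfs 6 [1, 3, 2, 3] = false := by decide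

lemma dfsf_5_r02323 : dfs 5 [0, 2, 3, 2, 3] = false := by decide

lemma dfsf_5_r12323 : dfs 5 [1, 2, 3, 2, 3] = false := by decide

lemma dfsf_5_r32323 : dfs 5 [3, 2, 3, 2, 3] = false := by decide

lemma dfsf_6_r2323 : dfs 6 [2, 3, 2, 3] = false := by
  rw [show (6 : ℕ) = 5 + 1 from rfl, dfs_succ, e_finRange]
  simp only [List.any_cons, List.any_nil, dfsf_5_r02323,
    dfsf_5_r12323,
    (show pruneChk [2, 2, 3, 2, 3] = false from by decide),
    dfsf_5_r32323,
    Bool.false_and, Bool.and_false, Bool.or_false, Bool.or_self]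

lemma dfsf_7_r323 : dfs 7 [3, 2, 3] = false := by
  rw [show (7 : ℕ) = 6 + 1 from rfl, dfs_succ, e_finRange]
  simp only [List.any_cons, List.any_nil, dfsf_6_r0323,
    dfsf_6_r1323,
    dfsf_6_r2323,
    (show pruneChk [3, 3, 2, 3] = false from by decide),
    Bool.false_and, Bool.and_false, Bool.or_false, Bool.or_self]

lemma dfsf_8_r23 : dfs 8 [2, 3] = false := by
  rw [show (8 : ℕ) = 7 + 1 from rfl, dfs_succ, e_finRange]
  simp only [List.any_cons, List.any_nil, dfsf_7_r023,
    dfsf_7_r123,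
    (show pruneChk [2, 2, 3] = false from by decide),
    dfsf_7_r323,
    Bool.false_and, Bool.and_false, Bool.or_false, Bool.or_self]

lemma dfsf_9_r3 : dfs 9 [3] = false := by
  rw [show (9 : ℕ) = 8 + 1 from rfl, dfs_succ, e_finRange]
  simp only [List.any_cons, List.any_nil, dfsf_8_r03,
    dfsf_8_r13,
    dfsf_8_r23,
    (show pruneChk [3, 3] = false from by decide),
    Bool.false_and, Bool.and_false, Bool.or_false, Bool.or_self]

lemma dfsf_10_rnil : dfs 10 [] = false := by
  rw [show (10 : ℕ) = 9 + 1 from rfl, dfs_succ, e_finRange]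
  simp only [List.any_cons, List.any_nil, dfsf_9_r0,
    dfsf_9_r1,
    dfsf_9_r2,
    dfsf_9_r3,
    Bool.false_and, Bool.and_false, Bool.or_false, Bool.or_self]

lemma hfalse : ∀ k < 11, dfs k [] = false := by
  intro k hk
  interval_cases k
  exacts [dfsf_0_rnil, dfsf_1_rnil, dfsf_2_rnil, dfsf_3_rnil, dfsf_4_rnil, dfsf_5_rnil, dfsf_6_rnil, dfsf_7_rnil, dfsf_8_rnil, dfsf_9_rnil, dfsf_10_rnil]

/-! ### Main theorem -/

/-- `(3,2,0,1,0,2,3,0,2,1,0)^ω` is a solution of the counterexample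
instance, but no finite path of length at most `10 = (max RD)/(min FT)` repeats to a
solution; the shortest period of a periodic solution is `11`, refuting the bound
claimed in Theorem 4.5 of Basilico et al. -/
theorem counterexample_to_basilico_bound :
    IsSolution RD12 FT12 (omegaPath u12 0) ∧
      (∀ u : List (Fin 4), u.length ≤ 10 → ¬IsSolution RD12 FT12 (omegaPath u 0)) ∧
      (∀ u : List (Fin 4), IsSolution RD12 FT12 (omegaPath u 0) → 11 ≤ u.length) := by
  have part2 : ∀ u : List (Fin 4), u.length ≤ 10 → ¬IsSolution RD12 FT12 (omegaPath u 0) := by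
    intro u hlen hsol
    have hdfs := dfs_complete u hsol u.length le_rfl
    rw [Nat.sub_self, List.take_zero, List.reverse_nil] at hdfs
    have := hfalse u.length (by omega)
    rw [this] at hdfs
    exact Bool.false_ne_true hdfs
  refine ⟨sol_of_check u12 (by decide), part2, ?_⟩
  intro u hsol
  by_contra hcon
  exact part2 u (by omega) hsol

end CRUAV
end

section
/- Every segment s_j starts with v_top or v_bot and ends with v_top or v_bot. -/
namespace CRUAV

/-- Duration of a finite path given as a list of vertices. -/
def durL {V : Type*} (FT : V → V → ℕ) (L : List V) : ℕ :=
  (L.zipWith FT L.tail).sum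

/-- The (inclusive) slice of a list between positions `a` and `b`. -/
def slice {V : Type*} (L : List V) (a b : ℕ) : List V := (L.take (b + 1)).drop a

/-- Duration of the subpath of the finite path `L` between positions `a` and `b`. -/
def fragDur {V : Type*} (FT : V → V → ℕ) (d : V) (L : List V) (a b : ℕ) : ℕ :=
  ∑ i ∈ Finset.Ico a b, FT (L.getD i d) (L.getD (i + 1) d)

/-! ### The constructed instance `G` -/

/-- The constant `l = 24h + 34`. -/
def l (h : ℕ) : ℕ := 24 * h + 34

/-- The constant `T`. -/
def T (m h : ℕ) : ℕ :=
  2 * (m * (2 * (3 * m + 1) * l h + l h) + m * (2 * (3 * m + 2) * l h + l h) + l h + 2 * h)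

/-- The vertices of the constructed instance `G`.  Gadgets are indexed by
`g : Fin (2*m)`: gadget `g` with `g < m` belongs to the variable `x_{g+1}^0`, and
gadget `g` with `m ≤ g` to the variable `x_{g-m+1}^1`.  `shared k` is the vertex
`v_{k+1}` shared by consecutive gadgets.  In `side g right pos`, `right = false`
selects the left side `LS` and `right = true` the right side `RS`; `pos` is
`0` (top), `1` (middle), `2` (bottom).  `row g c pos` is the vertex of the row of
gadget `g` in column `c` (of the `4h+2` columns of the `h` clause boxes alternating
with the `h+1` separator boxes) at height `pos`.  `clauseV k` is the clause vertex of
clause `c_{k+1}`; `pvt i right` is the pivot vertex of `LCG_{i+1}`/`RCG_{i+1}` and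
`port i right d` its four surrounding vertices (`d`: `0` = in↓, `1` = out↑,
`2` = in↑, `3` = out↓). -/
inductive Vtx (m h : ℕ) : Type where
  | top : Vtx m h
  | bot : Vtx m h
  | mid : Vtx m h
  | shared (k : Fin (2 * m - 1)) : Vtx m h
  | side (g : Fin (2 * m)) (right : Bool) (pos : Fin 3) : Vtx m h
  | row (g : Fin (2 * m)) (c : Fin (4 * h + 2)) (pos : Fin 3) : Vtx m h
  | clauseV (k : Fin h) : Vtx m h
  | pvt (i : Fin m) (right : Bool) : Vtx m h
  | port (i : Fin m) (right : Bool) (d : Fin 4) : Vtx m h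
  deriving DecidableEq

/-- The vertex at the top of gadget `g`. -/
def topVtx {m h : ℕ} (g : Fin (2 * m)) : Vtx m h :=
  if hg : (g : ℕ) = 0 then .top else .shared ⟨(g : ℕ) - 1, by have := g.isLt; omega⟩

/-- The vertex at the bottom of gadget `g`. -/
def botVtx {m h : ℕ} (g : Fin (2 * m)) : Vtx m h :=
  if hg : (g : ℕ) = 2 * m - 1 then .bot else .shared ⟨(g : ℕ), by have := g.isLt; omega⟩

/-- Flight time of the two long edges at the top of gadget `g`. -/
def longTop (m h : ℕ) (g : Fin (2 * m)) : ℕ :=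
  if (g : ℕ) < m then (3 * m + 1) * l h else (3 * m + 2) * l h

/-- Flight time of the two long edges at the bottom of gadget `g`
(the bottom long edges of the gadget of `x_m^0` already have flight time `(3m+2)l`). -/
def longBot (m h : ℕ) (g : Fin (2 * m)) : ℕ :=
  if (g : ℕ) + 1 < m then (3 * m + 1) * l h else (3 * m + 2) * l h

/-- The edges of `G`, listed in one direction, with their flight times.
`occurs k g = some true` (resp. `some false`) means that the variable of gadget `g`
occurs positively (resp. negatively) in the clause `c_{k+1}`. -/
def adjFT (m h : ℕ) (occurs : Fin h → Fin (2 * m) → Option Bool) :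
    Vtx m h → Vtx m h → Option ℕ
  -- long edges from the top of the first gadget
  | .top, .side g _ p => if (g : ℕ) = 0 ∧ (p : ℕ) = 0 then some (longTop m h g) else none
  -- long edges into the bottom of the last gadget
  | .bot, .side g _ p => if (g : ℕ) = 2 * m - 1 ∧ (p : ℕ) = 2 then some (longBot m h g) else none
  -- long edges at shared vertices
  | .shared k, .side g _ p =>
      if (k : ℕ) + 1 = (g : ℕ) ∧ (p : ℕ) = 0 then some (longTop m h g)
      else if (k : ℕ) = (g : ℕ) ∧ (p : ℕ) = 2 then some (longBot m h g)
      else none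
  -- vertical edges inside `LS` and `RS`
  | .side g r p, .side g' r' p' =>
      if g = g' ∧ r = r' ∧ (p : ℕ) + 1 = (p' : ℕ) then some 2 else none
  -- vertical edges inside a column of a row, and horizontal edges along the top
  -- and the bottom of a row
  | .row g c p, .row g' c' p' =>
      if g = g' ∧ c = c' ∧ (p : ℕ) + 1 = (p' : ℕ) then some 2
      else if g = g' ∧ (c : ℕ) + 1 = (c' : ℕ) ∧ p = p' ∧ ((p : ℕ) = 0 ∨ (p : ℕ) = 2) then
        some 2
      else none
  -- the edges at `v_mid`
  | .mid, .top => some (T m h / 4)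
  | .mid, .bot => some (T m h / 4)
  -- edges joining a clause vertex to the two bottom (positive occurrence) or the two
  -- top (negative occurrence) corners of the corresponding clause box
  | .clauseV k, .row g c p =>
      if ((c : ℕ) = 4 * (k : ℕ) + 2 ∨ (c : ℕ) = 4 * (k : ℕ) + 3) ∧
          ((occurs k g = some true ∧ (p : ℕ) = 2) ∨ (occurs k g = some false ∧ (p : ℕ) = 0))
      then some 2 else none
  -- edges inside the consistency gadgets
  | .pvt i r, .port i' r' _ => if i = i' ∧ r = r' then some 2 else none
  -- edges joining the ports of the consistency gadgets to the sides `LS`/`RS`: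
  -- in↓ and out↑ serve the gadget of `x_{i+1}^0`, in↑ and out↓ that of `x_{i+1}^1`;
  -- "in" ports attach to the bottom of the side, "out" ports to its top
  | .port i r dd, .side g s p =>
      if s = r ∧
          ((((dd : ℕ) = 0 ∨ (dd : ℕ) = 1) ∧ (g : ℕ) = (i : ℕ)) ∨
            (((dd : ℕ) = 2 ∨ (dd : ℕ) = 3) ∧ (g : ℕ) = (i : ℕ) + m)) ∧
          ((((dd : ℕ) = 0 ∨ (dd : ℕ) = 2) ∧ (p : ℕ) = 2) ∨
            (((dd : ℕ) = 1 ∨ (dd : ℕ) = 3) ∧ (p : ℕ) = 0))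
      then some 2 else none
  -- edges joining the ports of the consistency gadgets to the end columns of the rows
  -- (as in Figure 4 of the paper: on the left, in↓/in↑ attach to the bottom-left and
  -- out↑/out↓ to the top-left row corner; on the right, in↓/in↑ attach to the
  -- top-right and out↑/out↓ to the bottom-right row corner)
  | .port i r dd, .row g c p =>
      if ((r = false ∧ (c : ℕ) = 0) ∨ (r = true ∧ (c : ℕ) = 4 * h + 1)) ∧
          ((((dd : ℕ) = 0 ∨ (dd : ℕ) = 1) ∧ (g : ℕ) = (i : ℕ)) ∨
            (((dd : ℕ) = 2 ∨ (dd : ℕ) = 3) ∧ (g : ℕ) = (i : ℕ) + m)) ∧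
          ((r = false ∧ ((((dd : ℕ) = 0 ∨ (dd : ℕ) = 2) ∧ (p : ℕ) = 2) ∨
              (((dd : ℕ) = 1 ∨ (dd : ℕ) = 3) ∧ (p : ℕ) = 0))) ∨
            (r = true ∧ ((((dd : ℕ) = 0 ∨ (dd : ℕ) = 2) ∧ (p : ℕ) = 0) ∨
              (((dd : ℕ) = 1 ∨ (dd : ℕ) = 3) ∧ (p : ℕ) = 2))))
      then some 2 else none
  | _, _ => none

/-- The flight times of `G`: the listed edges, symmetrised; all remaining pairs of
distinct vertices are joined by an edge of flight time `2T`. -/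
def FT (m h : ℕ) (occurs : Fin h → Fin (2 * m) → Option Bool) (v w : Vtx m h) : ℕ :=
  if v = w then 0
  else
    match adjFT m h occurs v w with
    | some x => x
    | none =>
      match adjFT m h occurs w v with
      | some x => x
      | none => 2 * T m h

/-- The relative deadlines of `G`. -/
def RD (m h : ℕ) : Vtx m h → ℕ
  | .top => T m h
  | .bot => T m h
  | .mid => T m h
  | .shared _ => T m h + 2 * h
  | .side _ _ _ => T m h + l h + 2 * h
  | .row _ _ _ => T m h + l h + 2 * h
  | .clauseV _ => 3 * T m h / 2
  | .pvt i _ => T m h / 2 + m * (2 * (3 * m + 2) * l h + l h) + 4 * h - (2 * (i : ℕ) + 1) * l h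
  | .port _ _ _ => 3 * T m h / 2

/-! ### Periodic solutions split into segments -/

/-- The word `v_mid s₁ v_mid s₂ ⋯ v_mid s_p`. -/
def word {m h p : ℕ} (segs : Fin p → List (Vtx m h)) : List (Vtx m h) :=
  (List.ofFn (fun j => Vtx.mid :: segs j)).flatten

/-- The infinite periodic path `(v_mid s₁ v_mid s₂ ⋯ v_mid s_p)^ω`. -/
def pathOf {m h p : ℕ} (segs : Fin p → List (Vtx m h)) : ℕ → Vtx m h :=
  omegaPath (word segs) .mid

/-- The special vertices `S ∪ {v_top, v_bot}`. -/
def isSpecial {m h : ℕ} : Vtx m h → Bool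
  | .top => true
  | .bot => true
  | .shared _ => true
  | _ => false

/-- A fragment of the segment `L`: a maximal subpath, from position `a` to position
`b`, whose endpoints are distinct special vertices and which contains no other
special vertex. -/
def Fragment {m h : ℕ} (L : List (Vtx m h)) (a b : ℕ) : Prop :=
  a < b ∧ b < L.length ∧
    isSpecial (L.getD a Vtx.mid) = true ∧ isSpecial (L.getD b Vtx.mid) = true ∧
    L.getD a Vtx.mid ≠ L.getD b Vtx.mid ∧
    ∀ i, a < i → i < b → isSpecial (L.getD i Vtx.mid) = false

/-! ### Clause boxes, traversal patterns, traversal directions -/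

/-- The column of the first (`sec = false`) or second (`sec = true`) column of the
`(k+1)`-st clause box. -/
def boxCol {h : ℕ} (k : Fin h) (sec : Bool) : Fin (4 * h + 2) :=
  ⟨4 * (k : ℕ) + 2 + (if sec then 1 else 0), by have := k.isLt; split <;> omega⟩

/-- The vertices of the `(k+1)`-st clause box of gadget `g`. -/
def boxV {m h : ℕ} (g : Fin (2 * m)) (k : Fin h) (sec : Bool) (p : Fin 3) : Vtx m h :=
  .row g (boxCol k sec) p

/-- Membership in the `(k+1)`-st clause box of gadget `g`. -/
def InClauseBox {m h : ℕ} (g : Fin (2 * m)) (k : Fin h) (v : Vtx m h) : Prop :=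
  ∃ sec p, v = boxV g k sec p

/-- The order of the six vertices of a clause box in pattern `⊓`, entered at the
bottom corner of column `flip`. -/
def sqcapSeq {m h : ℕ} (g : Fin (2 * m)) (k : Fin h) (flip : Bool) : List (Vtx m h) :=
  [boxV g k flip 2, boxV g k flip 1, boxV g k flip 0,
   boxV g k (!flip) 0, boxV g k (!flip) 1, boxV g k (!flip) 2]

/-- The order of the six vertices of a clause box in pattern `⊔`, entered at the
top corner of column `flip`. -/
def sqcupSeq {m h : ℕ} (g : Fin (2 * m)) (k : Fin h) (flip : Bool) : List (Vtx m h) :=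
  [boxV g k flip 0, boxV g k flip 1, boxV g k flip 2,
   boxV g k (!flip) 2, boxV g k (!flip) 1, boxV g k (!flip) 0]

/-- `L` traverses the vertices of `seq` in order, consecutively except for possible
detours from a vertex of `seq` to a clause vertex and immediately back. -/
def TraversedIn {m h : ℕ} (L : List (Vtx m h)) (seq : List (Vtx m h)) : Prop :=
  ∃ f : Fin seq.length → ℕ,
    (∀ t, f t < L.length) ∧
    (∀ t, L.getD (f t) Vtx.mid = seq.get t) ∧
    (∀ (t : ℕ) (ht : t + 1 < seq.length),
      f ⟨t + 1, ht⟩ = f ⟨t, by omega⟩ + 1 ∨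
        (f ⟨t + 1, ht⟩ = f ⟨t, by omega⟩ + 2 ∧
          ∃ k', L.getD (f ⟨t, by omega⟩ + 1) Vtx.mid = Vtx.clauseV k'))

/-- The `(k+1)`-st clause box of gadget `g` is traversed in pattern `⊓` by the
segment `L` (each of its vertices being visited exactly once, with possible detours
via clause vertices). -/
def SqcapBox {m h : ℕ} (L : List (Vtx m h)) (g : Fin (2 * m)) (k : Fin h) : Prop :=
  (∀ sec p, L.count (boxV g k sec p) = 1) ∧ ∃ flip, TraversedIn L (sqcapSeq g k flip)

/-- The `(k+1)`-st clause box of gadget `g` is traversed in pattern `⊔` by the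
segment `L`. -/
def SqcupBox {m h : ℕ} (L : List (Vtx m h)) (g : Fin (2 * m)) (k : Fin h) : Prop :=
  (∀ sec p, L.count (boxV g k sec p) = 1) ∧ ∃ flip, TraversedIn L (sqcupSeq g k flip)

/-- The gadget of `x_{i+1}^0`, as an index in `Fin (2*m)`. -/
def g0 {m : ℕ} (i : Fin m) : Fin (2 * m) := ⟨(i : ℕ), by have := i.isLt; omega⟩

/-- The gadget of `x_{i+1}^1`, as an index in `Fin (2*m)`. -/
def g1 {m : ℕ} (i : Fin m) : Fin (2 * m) := ⟨(i : ℕ) + m, by have := i.isLt; omega⟩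

/-- Gadget `g` is traversed in the `true` direction by the segment `L`: the long edges
are used to enter the left side `LS` from the top vertex and to leave from the right
side `RS` to the bottom vertex. -/
def TravTrue {m h : ℕ} (L : List (Vtx m h)) (g : Fin (2 * m)) : Prop :=
  (∃ n, n + 1 < L.length ∧ L.getD n Vtx.mid = topVtx g ∧
      L.getD (n + 1) Vtx.mid = Vtx.side g false 0) ∧
  (∃ n, n + 1 < L.length ∧ L.getD n Vtx.mid = Vtx.side g true 2 ∧
      L.getD (n + 1) Vtx.mid = botVtx g)

/-- Gadget `g` is traversed in the `false` direction by the segment `L`: the long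
edges are used to enter the right side `RS` from the top vertex and to leave from the
left side `LS` to the bottom vertex. -/
def TravFalse {m h : ℕ} (L : List (Vtx m h)) (g : Fin (2 * m)) : Prop :=
  (∃ n, n + 1 < L.length ∧ L.getD n Vtx.mid = topVtx g ∧
      L.getD (n + 1) Vtx.mid = Vtx.side g true 0) ∧
  (∃ n, n + 1 < L.length ∧ L.getD n Vtx.mid = Vtx.side g false 2 ∧
      L.getD (n + 1) Vtx.mid = botVtx g)

/-- Position of the first visit, within the first `m` fragments of the segment `L`
(i.e. at positions preceded by at most `m` occurrences of special vertices), of the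
pivot pair `{pvt_{i+1}^L, pvt_{i+1}^R}`. -/
noncomputable def firstVisitFH (m h : ℕ) (L : List (Vtx m h)) (i : Fin m) : ℕ :=
  sInf {n | n < L.length ∧ (L.take (n + 1)).countP isSpecial ≤ m ∧
    (L.getD n Vtx.mid = Vtx.pvt i false ∨ L.getD n Vtx.mid = Vtx.pvt i true)}

/-- Position of the first visit, within the last `m` fragments of the segment `L`
(i.e. at positions preceded by at least `m+1` occurrences of special vertices), of the
pivot pair `{pvt_{i+1}^L, pvt_{i+1}^R}`. -/
noncomputable def firstVisitSH (m h : ℕ) (L : List (Vtx m h)) (i : Fin m) : ℕ :=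
  sInf {n | n < L.length ∧ m + 1 ≤ (L.take (n + 1)).countP isSpecial ∧
    (L.getD n Vtx.mid = Vtx.pvt i false ∨ L.getD n Vtx.mid = Vtx.pvt i true)}

/-- `φ(j)` is satisfied: every clause is satisfied by the assignment `σ`, where the
variable `x_{i+1}^0` of clause `c_{k+1}` reads `σ j i` and the variable `x_{i+1}^1`
reads `σ (j+1) i`. -/
def SatisfiesAt (m h : ℕ) (occurs : Fin h → Fin (2 * m) → Option Bool)
    (σ : ℕ → Fin m → Bool) (j : ℕ) : Prop :=
  ∀ k : Fin h, ∃ (g : Fin (2 * m)) (b : Bool), occurs k g = some b ∧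
    (if hg : (g : ℕ) < m then σ j ⟨(g : ℕ), hg⟩ = b
     else σ (j + 1) ⟨(g : ℕ) - m, by have := g.isLt; omega⟩ = b)


/-! ### Auxiliary lemmas for Statement 14 -/

section Aux

variable {m h : ℕ}

lemma l_pos (h : ℕ) : 0 < l h := by unfold l; omega

lemma T_pos (m h : ℕ) : 0 < T m h := by unfold T l; positivity

lemma adjFT_snd_mid (occurs : Fin h → Fin (2 * m) → Option Bool) (v : Vtx m h) :
    adjFT m h occurs v Vtx.mid = none := by
  cases v <;> rfl

lemma adjFT_mid_snd (occurs : Fin h → Fin (2 * m) → Option Bool) (v : Vtx m h)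
    (h1 : v ≠ Vtx.top) (h2 : v ≠ Vtx.bot) :
    adjFT m h occurs Vtx.mid v = none := by
  cases v <;> first | rfl | simp_all

lemma FT_mid_left (occurs : Fin h → Fin (2 * m) → Option Bool) (v : Vtx m h)
    (h1 : v ≠ Vtx.top) (h2 : v ≠ Vtx.bot) (h3 : v ≠ Vtx.mid) :
    FT m h occurs Vtx.mid v = 2 * T m h := by
  unfold FT
  rw [if_neg (fun e => h3 e.symm), adjFT_mid_snd occurs v h1 h2, adjFT_snd_mid occurs v]

lemma FT_mid_right (occurs : Fin h → Fin (2 * m) → Option Bool) (v : Vtx m h)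
    (h1 : v ≠ Vtx.top) (h2 : v ≠ Vtx.bot) (h3 : v ≠ Vtx.mid) :
    FT m h occurs v Vtx.mid = 2 * T m h := by
  unfold FT
  rw [if_neg h3, adjFT_snd_mid occurs v, adjFT_mid_snd occurs v h1 h2]

/-- The list of blocks making up `word segs`. -/
def blocks {p : ℕ} (segs : Fin p → List (Vtx m h)) : List (List (Vtx m h)) :=
  List.ofFn (fun j => Vtx.mid :: segs j)

/-- Starting position of the `j`-th block inside `word segs`. -/
def offset {p : ℕ} (segs : Fin p → List (Vtx m h)) (j : ℕ) : ℕ :=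
  ((blocks segs).take j).flatten.length

lemma word_decomp {p : ℕ} (segs : Fin p → List (Vtx m h)) (j : Fin p) :
    word segs = ((blocks segs).take (j : ℕ)).flatten ++
      ((Vtx.mid :: segs j) ++ ((blocks segs).drop ((j : ℕ) + 1)).flatten) := by
  have hj : (j : ℕ) < (blocks segs).length := by
    simp only [blocks, List.length_ofFn]; exact j.isLt
  calc word segs = (blocks segs).flatten := rfl
    _ = ((blocks segs).take (j : ℕ) ++ (blocks segs).drop (j : ℕ)).flatten := by
        rw [List.take_append_drop]
    _ = ((blocks segs).take (j : ℕ)).flatten ++ ((blocks segs).drop (j : ℕ)).flatten :=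
        List.flatten_append
    _ = ((blocks segs).take (j : ℕ)).flatten ++
          (((blocks segs)[(j : ℕ)]'hj) :: (blocks segs).drop ((j : ℕ) + 1)).flatten := by
        rw [← List.drop_eq_getElem_cons hj]
    _ = ((blocks segs).take (j : ℕ)).flatten ++
          ((Vtx.mid :: segs j) ++ ((blocks segs).drop ((j : ℕ) + 1)).flatten) := by
        rw [List.flatten_cons]
        congr 2
        simp [blocks, List.getElem_ofFn]

lemma word_getD {p : ℕ} (segs : Fin p → List (Vtx m h)) (j : Fin p) (t : ℕ) :
    (word segs).getD (offset segs (j : ℕ) + t) Vtx.mid =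
      ((Vtx.mid :: segs j) ++ ((blocks segs).drop ((j : ℕ) + 1)).flatten).getD t Vtx.mid := by
  rw [word_decomp segs j,
    List.getD_append_right _ _ _ (offset segs (j : ℕ) + t) (by simp only [offset]; omega)]
  congr 1
  simp only [offset]
  omega

lemma word_length' {p : ℕ} (segs : Fin p → List (Vtx m h)) (j : Fin p) :
    (word segs).length = offset segs (j : ℕ) +
      (1 + (segs j).length + ((blocks segs).drop ((j : ℕ) + 1)).flatten.length) := by
  rw [word_decomp segs j]
  simp only [offset, List.length_append, List.length_cons]
  omega

end Aux

/-- Every segment starts with `v_top` or `v_bot` and ends with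
`v_top` or `v_bot`. -/
theorem segment_endpoints_top_or_bot (m h : ℕ) (hm : 2 < m) (hh : 0 < h)
    (occurs : Fin h → Fin (2 * m) → Option Bool)
    (p : ℕ) (hp : 0 < p) (segs : Fin p → List (Vtx m h))
    (hne : ∀ j, segs j ≠ [])
    (hmid : ∀ j, Vtx.mid ∉ segs j)
    (hsol : IsSolution (RD m h) (FT m h occurs) (pathOf segs)) :
    ∀ j, ((segs j).head? = some Vtx.top ∨ (segs j).head? = some Vtx.bot) ∧
      ((segs j).getLast? = some Vtx.top ∨ (segs j).getLast? = some Vtx.bot) := by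
  intro j
  set s := pathOf segs with hs
  obtain ⟨hstep, hio, hdead⟩ := hsol
  have hTpos := T_pos m h
  set a := offset segs (j : ℕ) with ha
  set len := (segs j).length with hlen
  set R := ((blocks segs).drop ((j : ℕ) + 1)).flatten with hR
  have hlen0 : 0 < len := by rw [hlen]; exact List.length_pos_iff.mpr (hne j)
  have hwlen : (word segs).length = a + (1 + len + R.length) := word_length' segs j
  set b := a + 1 + len with hb
  have hsn : ∀ n, n < (word segs).length → s n = (word segs).getD n Vtx.mid := by
    intro n hn
    rw [hs]
    show (word segs).getD (n % (word segs).length) Vtx.mid = _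
    rw [Nat.mod_eq_of_lt hn]
  have hget : ∀ t, (word segs).getD (a + t) Vtx.mid
      = ((Vtx.mid :: segs j) ++ R).getD t Vtx.mid := fun t => word_getD segs j t
  have hsa : s a = Vtx.mid := by
    rw [hsn a (by omega)]
    have h0 := hget 0
    simpa using h0
  have hseg : ∀ t, t < len → s (a + 1 + t) = (segs j).getD t Vtx.mid := by
    intro t ht
    rw [hsn _ (by omega)]
    have h1 := hget (1 + t)
    rw [show a + (1 + t) = a + 1 + t by omega] at h1
    rw [h1, List.cons_append, show 1 + t = t + 1 by omega, List.getD_cons_succ,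
      List.getD_append _ _ _ _ (by omega)]
  have hsb : s b = Vtx.mid := by
    rcases Nat.lt_or_ge ((j : ℕ) + 1) p with hjp | hjp
    · have hjb : (j : ℕ) + 1 < (blocks segs).length := by
        simpa only [blocks, List.length_ofFn] using hjp
      have hRd : R = ((Vtx.mid :: segs ⟨(j : ℕ) + 1, hjp⟩) :: (blocks segs).drop ((j : ℕ) + 2)).flatten := by
        rw [hR, List.drop_eq_getElem_cons hjb]
        congr 2
        simp [blocks, List.getElem_ofFn]
      have hR0 : R.getD 0 Vtx.mid = Vtx.mid := by
        rw [hRd, List.flatten_cons]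
        rfl
      have hRlen : 0 < R.length := by rw [hRd, List.flatten_cons]; simp
      rw [hsn b (by omega)]
      have h1 := hget (1 + len)
      rw [show a + (1 + len) = b by omega] at h1
      rw [h1, List.cons_append, show 1 + len = len + 1 by omega, List.getD_cons_succ,
        List.getD_append_right _ _ _ _ (by omega)]
      rw [show len - (segs j).length = 0 by omega]
      exact hR0
    · have hdrop : (blocks segs).drop ((j : ℕ) + 1) = [] :=
        List.drop_eq_nil_of_le (by simp only [blocks, List.length_ofFn]; omega)
      have hR0 : R = [] := by rw [hR, hdrop]; rfl
      have hbw : b = (word segs).length := by rw [hwlen, hR0]; simp; omega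
      rw [hs]
      show (word segs).getD (b % (word segs).length) Vtx.mid = Vtx.mid
      rw [hbw, Nat.mod_self]
      have h0 := word_getD segs ⟨0, hp⟩ 0
      have hoff0 : offset segs ((⟨0, hp⟩ : Fin p) : ℕ) = 0 := rfl
      rw [hoff0] at h0
      simpa using h0
  have hsegmem : ∀ t, t < len → s (a + 1 + t) ∈ segs j := by
    intro t ht
    rw [hseg t ht, List.getD_eq_getElem _ _ (by omega)]
    exact List.getElem_mem _
  have hnemid : ∀ t, t < len → s (a + 1 + t) ≠ Vtx.mid := by
    intro t ht hcon
    exact hmid j (hcon ▸ hsegmem t ht)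
  have hmidne : ∀ i, a < i → i < b → s i ≠ Vtx.mid := by
    intro i h1 h2
    have h3 := hnemid (i - a - 1) (by omega)
    rwa [show a + 1 + (i - a - 1) = i by omega] at h3
  have hdur : dur (FT m h occurs) s a b ≤ T m h := by
    have hd := hdead Vtx.mid a b (by omega) hsa hsb hmidne
    simpa [RD] using hd
  unfold dur at hdur
  have hterm1 : FT m h occurs (s a) (s (a + 1)) ≤ T m h := by
    refine le_trans ?_ hdur
    exact Finset.single_le_sum (f := fun i => FT m h occurs (s i) (s (i + 1)))
      (fun i _ => Nat.zero_le _) (Finset.mem_Ico.mpr ⟨le_refl a, by omega⟩)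
  have hterm2 : FT m h occurs (s (a + 1 + (len - 1))) (s (a + 1 + (len - 1) + 1)) ≤ T m h := by
    refine le_trans ?_ hdur
    exact Finset.single_le_sum (f := fun i => FT m h occurs (s i) (s (i + 1)))
      (fun i _ => Nat.zero_le _) (Finset.mem_Ico.mpr ⟨by omega, by omega⟩)
  have hA1 : s (a + 1) ≠ Vtx.mid := by
    have h1 := hnemid 0 hlen0
    simpa using h1
  have hhead : s (a + 1) = Vtx.top ∨ s (a + 1) = Vtx.bot := by
    by_contra hc
    push_neg at hc
    rw [hsa, FT_mid_left occurs _ hc.1 hc.2 hA1] at hterm1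
    omega
  have hCne : s (a + 1 + (len - 1)) ≠ Vtx.mid := hnemid (len - 1) (by omega)
  have hlast : s (a + 1 + (len - 1)) = Vtx.top ∨ s (a + 1 + (len - 1)) = Vtx.bot := by
    by_contra hc
    push_neg at hc
    rw [show a + 1 + (len - 1) + 1 = b by omega, hsb,
      FT_mid_right occurs _ hc.1 hc.2 hCne] at hterm2
    omega
  have hh? : (segs j).head? = some ((segs j).getD 0 Vtx.mid) := by
    obtain ⟨x, xs, hx⟩ := List.exists_cons_of_ne_nil (hne j)
    rw [hx]; rfl
  have hl? : (segs j).getLast? = some ((segs j).getD (len - 1) Vtx.mid) := by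
    rw [List.getLast?_eq_getLast (hne j), List.getLast_eq_getElem,
      List.getD_eq_getElem _ _ (by omega : len - 1 < (segs j).length)]
  have hgd0 : (segs j).getD 0 Vtx.mid = s (a + 1) := by
    have h1 := hseg 0 hlen0
    simpa using h1.symm
  have hgdl : (segs j).getD (len - 1) Vtx.mid = s (a + 1 + (len - 1)) :=
    (hseg (len - 1) (by omega)).symm
  constructor
  · rw [hh?, hgd0]
    rcases hhead with h1 | h1
    · left; rw [h1]
    · right; rw [h1]
  · rw [hl?, hgdl]
    rcases hlast with h1 | h1
    · left; rw [h1]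
    · right; rw [h1]


end CRUAV
end
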